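/- arXiv:1407.6215 — 5 statements merged into one kernel-verified Lean document; each statement's English description precedes it below -/
import Mathlib

section
/- Let G be a finite group and L ≤ H subgroups with L, H ∈ CD(G); write H* = C_G(L) and L* = C_G(H). Assume that the commutator subgroup [⟨H ∪ H*⟩, ⟨H ∪ H*⟩] is contained in L ∩ L*. Let p be a prime dividing |H|/|L| and let k be a positive integer. Define A_k(H) to be the subgroup generated by {x ∈ H : x^{p^k} ∈ L}, and B_k(H) to be the join of L with the subgroup generated by {x^{p^k} : x ∈ H}; define A_k(H*) and B_k(H*) analogously (with L* in place of L and H* in place of H, using the same prime p). Then A_k(H), B_k(H), A_k(H*), B_k(H*) all belong to CD(G); moreover C_G(A_k(H)) = B_k(H*) and C_G(A_k(H*)) = B_k(H). -/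
open Subgroup

/-- In a group, if `c := x⁻¹z⁻¹xz` commutes with both `x` and `z`, and `z` commutes with `x^n`,
then `x` commutes with `z^n`. -/
lemma commute_pow_aux {G : Type*} [Group G] (x z : G) (n : ℕ)
    (h1 : Commute x (x⁻¹ * z⁻¹ * x * z)) (h2 : Commute (x⁻¹ * z⁻¹ * x * z) z)
    (h3 : Commute (x ^ n) z) : Commute x (z ^ n) := by
  set c := x⁻¹ * z⁻¹ * x * z with hc
  have e1 : z⁻¹ * x * z = x * c := by rw [hc]; group
  have e2 : z⁻¹ * x ^ n * z = x ^ n * c ^ n := by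
    have h := conj_pow (i := n) (a := z⁻¹) (b := x)
    rw [inv_inv] at h
    rw [← h, e1, h1.mul_pow]
  have hcn : c ^ n = 1 := by
    have h4 : z⁻¹ * x ^ n * z = x ^ n := by
      rw [mul_assoc, h3.eq, inv_mul_cancel_left]
    rw [h4] at e2
    exact (mul_left_cancel (a := x ^ n) (by rw [← e2, mul_one])).symm
  have e3 : x⁻¹ * z * x = z * c⁻¹ := by rw [hc]; group
  have e4 : x⁻¹ * z ^ n * x = z ^ n := by
    have h := conj_pow (i := n) (a := x⁻¹) (b := z)
    rw [inv_inv] at h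
    rw [← h, e3, (h2.symm.inv_right).mul_pow, inv_pow, hcn, inv_one, mul_one]
  have : z ^ n * x = x * z ^ n := by
    calc z ^ n * x = x * (x⁻¹ * z ^ n * x) := by group
    _ = x * z ^ n := by rw [e4]
  exact this.symm

lemma centralizer_closure_eq {G : Type*} [Group G] (S : Set G) :
    Subgroup.centralizer (Subgroup.closure S : Set G) = Subgroup.centralizer S := by
  refine le_antisymm (Subgroup.centralizer_le Subgroup.subset_closure) ?_
  rw [Subgroup.le_centralizer_iff]
  exact Subgroup.closure_le_centralizer_centralizer S

lemma card_comap_eq {H Q : Type*} [Group H] [Group Q] [Finite H]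
    (π : H →* Q) (hs : Function.Surjective π) (N : Subgroup Q) :
    Nat.card (N.comap π) = Nat.card N * Nat.card π.ker := by
  let g : ↥(N.comap π) →* Q := π.comp (N.comap π).subtype
  have hrange : g.range = N := by
    have : g.range = ((N.comap π).subtype.range).map π := by
      ext x
      simp [g, MonoidHom.mem_range, Subgroup.mem_map]
    rw [this, Subgroup.range_subtype, Subgroup.map_comap_eq_self_of_surjective hs]
  have hker : g.ker = π.ker.subgroupOf (N.comap π) := by
    rw [Subgroup.subgroupOf, MonoidHom.comap_ker]
  have hkerle : π.ker ≤ N.comap π := fun x hx => by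
    simp [Subgroup.mem_comap, MonoidHom.mem_ker.mp hx, N.one_mem]
  have hcardker : Nat.card g.ker = Nat.card π.ker := by
    rw [hker]
    exact Nat.card_congr (Subgroup.subgroupOfEquivOfLe hkerle).toEquiv
  have h1 : Nat.card (N.comap π) = Nat.card (↥(N.comap π) ⧸ g.ker) * Nat.card g.ker :=
    Subgroup.card_eq_card_quotient_mul_card_subgroup g.ker
  have h2 : Nat.card (↥(N.comap π) ⧸ g.ker) = Nat.card N := by
    rw [Nat.card_congr (QuotientGroup.quotientKerEquivRange g).toEquiv, hrange]
  rw [h1, h2, hcardker]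


/-- Counting lemma: if `[H,H] ≤ L ≤ H`, then with
`A = ⟨{x ∈ H : xⁿ ∈ L}⟩` and `B = L ⊔ ⟨{xⁿ : x ∈ H}⟩` we have `|A|·|B| = |L|·|H|`. -/
lemma side_card {G : Type*} [Group G] [Finite G] (L H : Subgroup G) (hLH : L ≤ H)
    (hcm : ∀ x ∈ H, ∀ y ∈ H, x * y * x⁻¹ * y⁻¹ ∈ L) (n : ℕ) :
    Nat.card (Subgroup.closure {x : G | x ∈ H ∧ x ^ n ∈ L}) *
      Nat.card (L ⊔ Subgroup.closure {y : G | ∃ x ∈ H, y = x ^ n} : Subgroup G)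
      = Nat.card L * Nat.card H := by
  set L' : Subgroup H := L.subgroupOf H with hL'
  haveI hN : L'.Normal := by
    constructor
    intro h hh g
    rw [hL', Subgroup.mem_subgroupOf] at hh ⊢
    have hc := hcm g g.2 h h.2
    have : ((g * h * g⁻¹ : H) : G) = ((g : G) * h * g⁻¹ * (h : G)⁻¹) * (h : G) := by
      push_cast; group
    rw [this]
    exact L.mul_mem hc hh
  have comm : ∀ a b : H ⧸ L', Commute a b := by
    intro a b
    induction a using QuotientGroup.induction_on with
    | H x =>
    induction b using QuotientGroup.induction_on with
    | H y =>
    show ((x * y : H) : H ⧸ L') = ((y * x : H) : H ⧸ L')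
    rw [QuotientGroup.eq]
    rw [hL', Subgroup.mem_subgroupOf]
    have hc := hcm (y : G)⁻¹ (H.inv_mem y.2) (x : G)⁻¹ (H.inv_mem x.2)
    have : (((x * y)⁻¹ * (y * x) : H) : G) = (y:G)⁻¹ * (x:G)⁻¹ * ((y:G)⁻¹)⁻¹ * ((x:G)⁻¹)⁻¹ := by
      push_cast; group
    rw [this]
    exact hc
  let φ : (H ⧸ L') →* (H ⧸ L') :=
    { toFun := fun q => q ^ n
      map_one' := one_pow n
      map_mul' := fun a b => (comm a b).mul_pow n }
  let π : H →* H ⧸ L' := QuotientGroup.mk' L'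
  have hπs : Function.Surjective π := QuotientGroup.mk'_surjective L'
  let ψ : H →* H ⧸ L' := φ.comp π
  -- membership in ker ψ
  have hker : ∀ h : H, h ∈ ψ.ker ↔ (h : G) ^ n ∈ L := by
    intro h
    rw [MonoidHom.mem_ker]
    have e : ψ h = π (h ^ n) := by
      show (π h) ^ n = π (h ^ n)
      rw [map_pow]
    rw [e, QuotientGroup.mk'_apply, QuotientGroup.eq_one_iff, hL', Subgroup.mem_subgroupOf]
    norm_cast
  -- A is the image of ker ψ
  have hAset : {x : G | x ∈ H ∧ x ^ n ∈ L} = (ψ.ker.map H.subtype : Set G) := by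
    ext x
    constructor
    · rintro ⟨hxH, hxn⟩
      exact ⟨⟨x, hxH⟩, (hker ⟨x, hxH⟩).mpr hxn, rfl⟩
    · rintro ⟨h, hh, rfl⟩
      exact ⟨h.2, (hker h).mp hh⟩
  have hA : Subgroup.closure {x : G | x ∈ H ∧ x ^ n ∈ L} = ψ.ker.map H.subtype := by
    rw [hAset, Subgroup.closure_eq]
  -- B is the image of comap π φ.range
  have hB : (L ⊔ Subgroup.closure {y : G | ∃ x ∈ H, y = x ^ n} : Subgroup G)
      = (φ.range.comap π).map H.subtype := by
    apply le_antisymm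
    · apply sup_le
      · intro x hx
        refine ⟨⟨x, hLH hx⟩, ?_, rfl⟩
        simp only [SetLike.mem_coe, Subgroup.mem_comap]
        have : π ⟨x, hLH hx⟩ = 1 := by
          rw [QuotientGroup.mk'_apply, QuotientGroup.eq_one_iff]
          rw [hL', Subgroup.mem_subgroupOf]
          exact hx
        rw [this]
        exact φ.range.one_mem
      · rw [Subgroup.closure_le]
        rintro y ⟨x, hx, rfl⟩
        refine ⟨⟨x ^ n, H.pow_mem hx n⟩, ?_, rfl⟩
        simp only [SetLike.mem_coe, Subgroup.mem_comap]
        have : (⟨x ^ n, H.pow_mem hx n⟩ : H) = (⟨x, hx⟩ : H) ^ n := by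
          ext; push_cast; rfl
        rw [this, map_pow]
        exact ⟨π ⟨x, hx⟩, rfl⟩
    · rintro x ⟨h, hh, rfl⟩
      simp only [SetLike.mem_coe, Subgroup.mem_comap] at hh
      show (h : G) ∈ (L ⊔ Subgroup.closure {y : G | ∃ x ∈ H, y = x ^ n} : Subgroup G)
      obtain ⟨q, hq⟩ := hh
      obtain ⟨w, rfl⟩ := hπs q
      have hq' : π (w ^ n) = π h := by
        rw [map_pow]; exact hq
      have hmem : (w ^ n)⁻¹ * h ∈ L' := by
        rw [← QuotientGroup.eq]
        exact hq'
      rw [hL', Subgroup.mem_subgroupOf] at hmem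
      have hsplit : (h : G) = ((w : G)) ^ n * (((w ^ n)⁻¹ * h : H) : G) := by
        push_cast; group
      rw [hsplit]
      apply Subgroup.mul_mem
      · exact Subgroup.mem_sup_right (Subgroup.subset_closure ⟨w, w.2, rfl⟩)
      · exact Subgroup.mem_sup_left hmem
  -- cardinalities
  have hcardL' : Nat.card L' = Nat.card L :=
    Nat.card_congr (Subgroup.subgroupOfEquivOfLe hLH).toEquiv
  have hkerπ : π.ker = L' := QuotientGroup.ker_mk' L'
  have hcardA : Nat.card (Subgroup.closure {x : G | x ∈ H ∧ x ^ n ∈ L})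
      = Nat.card φ.ker * Nat.card L := by
    rw [hA]
    rw [← Nat.card_congr (Subgroup.equivMapOfInjective ψ.ker H.subtype
      H.subtype_injective).toEquiv]
    have : ψ.ker = φ.ker.comap π := (MonoidHom.comap_ker φ π).symm
    rw [this, card_comap_eq π hπs φ.ker, hkerπ, hcardL']
  have hcardB : Nat.card (L ⊔ Subgroup.closure {y : G | ∃ x ∈ H, y = x ^ n} : Subgroup G)
      = Nat.card φ.range * Nat.card L := by
    rw [hB]
    rw [← Nat.card_congr (Subgroup.equivMapOfInjective (φ.range.comap π) H.subtype
      H.subtype_injective).toEquiv]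
    rw [card_comap_eq π hπs φ.range, hkerπ, hcardL']
  have hQ : Nat.card φ.ker * Nat.card φ.range = Nat.card (H ⧸ L') := by
    have h1 : Nat.card (H ⧸ L') = Nat.card ((H ⧸ L') ⧸ φ.ker) * Nat.card φ.ker :=
      Subgroup.card_eq_card_quotient_mul_card_subgroup φ.ker
    have h2 : Nat.card ((H ⧸ L') ⧸ φ.ker) = Nat.card φ.range :=
      Nat.card_congr (QuotientGroup.quotientKerEquivRange φ).toEquiv
    rw [h1, h2, mul_comm]
  have hH : Nat.card H = Nat.card (H ⧸ L') * Nat.card L := by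
    rw [Subgroup.card_eq_card_quotient_mul_card_subgroup L', hcardL']
  rw [hcardA, hcardB, hH, ← hQ]
  ring

/-- The Chermak-Delgado measure of a subgroup `H` of a finite group `G`:
`m_G(H) = |H| · |C_G(H)|`. -/
noncomputable def CDmeasure {G : Type*} [Group G] (H : Subgroup G) : ℕ :=
  Nat.card H * Nat.card (Subgroup.centralizer (H : Set G))

/-- `H` belongs to the Chermak-Delgado lattice of `G`: its measure is maximal. -/
def inCD {G : Type*} [Group G] (H : Subgroup G) : Prop :=
  ∀ K : Subgroup G, CDmeasure K ≤ CDmeasure H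

/-- with `L ≤ H` both in `CD(G)`, `H* = C_G(L)`, `L* = C_G(H)`,
`[⟨H ∪ H*⟩, ⟨H ∪ H*⟩] ≤ L ∩ L*`, `p` a prime dividing `|H|/|L|`, and `k ≥ 1`,
the subgroups `A_k(H)`, `B_k(H)`, `A_k(H*)`, `B_k(H*)` all lie in `CD(G)`,
with `C_G(A_k(H)) = B_k(H*)` and `C_G(A_k(H*)) = B_k(H)`. -/
theorem stmt0 {G : Type*} [Group G] [Finite G] (L H : Subgroup G) (hLH : L ≤ H)
    (hL : inCD L) (hH : inCD H)
    (Hstar Lstar : Subgroup G)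
    (hHstar : Hstar = Subgroup.centralizer (L : Set G))
    (hLstar : Lstar = Subgroup.centralizer (H : Set G))
    (hcomm : ⁅H ⊔ Hstar, H ⊔ Hstar⁆ ≤ L ⊓ Lstar)
    (p : ℕ) (hp : p.Prime) (hdvd : p ∣ Nat.card H / Nat.card L)
    (k : ℕ) (hk : 0 < k)
    (AkH BkH AkHstar BkHstar : Subgroup G)
    (hAkH : AkH = Subgroup.closure {x : G | x ∈ H ∧ x ^ p ^ k ∈ L})
    (hBkH : BkH = L ⊔ Subgroup.closure {y : G | ∃ x ∈ H, y = x ^ p ^ k})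
    (hAkHstar : AkHstar = Subgroup.closure {x : G | x ∈ Hstar ∧ x ^ p ^ k ∈ Lstar})
    (hBkHstar : BkHstar = Lstar ⊔ Subgroup.closure {y : G | ∃ x ∈ Hstar, y = x ^ p ^ k}) :
    inCD AkH ∧ inCD BkH ∧ inCD AkHstar ∧ inCD BkHstar ∧
    Subgroup.centralizer (AkH : Set G) = BkHstar ∧
    Subgroup.centralizer (AkHstar : Set G) = BkH := by
  set n := p ^ k with hn
  -- commutator facts
  have hcmH : ∀ x ∈ H, ∀ y ∈ H, x * y * x⁻¹ * y⁻¹ ∈ L := by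
    intro x hx y hy
    have h := hcomm (Subgroup.commutator_mem_commutator
      (Subgroup.mem_sup_left hx) (Subgroup.mem_sup_left hy))
    rw [commutatorElement_def] at h
    exact h.1
  have hcmHs : ∀ x ∈ Hstar, ∀ y ∈ Hstar, x * y * x⁻¹ * y⁻¹ ∈ Lstar := by
    intro x hx y hy
    have h := hcomm (Subgroup.commutator_mem_commutator
      (Subgroup.mem_sup_right hx) (Subgroup.mem_sup_right hy))
    rw [commutatorElement_def] at h
    exact h.2
  have hLsHs : Lstar ≤ Hstar := by
    rw [hLstar, hHstar]
    exact Subgroup.centralizer_le (fun x hx => hLH hx)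
  -- counting
  have cardAB : Nat.card AkH * Nat.card BkH = Nat.card L * Nat.card H := by
    rw [hAkH, hBkH]; exact side_card L H hLH hcmH n
  have cardABs : Nat.card AkHstar * Nat.card BkHstar = Nat.card Lstar * Nat.card Hstar := by
    rw [hAkHstar, hBkHstar]; exact side_card Lstar Hstar hLsHs hcmHs n
  -- key commuting facts
  have keyHs : ∀ x, x ∈ H → x ^ n ∈ L → ∀ z ∈ Hstar, Commute x (z ^ n) := by
    intro x hx hxn z hz
    have hcmem : x⁻¹ * z⁻¹ * x * z ∈ L ⊓ Lstar := by
      have h := hcomm (Subgroup.commutator_mem_commutator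
        (Subgroup.mem_sup_left (H.inv_mem hx)) (Subgroup.mem_sup_right (Hstar.inv_mem hz)))
      rwa [commutatorElement_def, inv_inv, inv_inv] at h
    have hcLs : x⁻¹ * z⁻¹ * x * z ∈ Subgroup.centralizer (H : Set G) := by
      rw [← hLstar]; exact hcmem.2
    have hzc : z ∈ Subgroup.centralizer (L : Set G) := by
      rw [← hHstar]; exact hz
    have h1 : Commute x (x⁻¹ * z⁻¹ * x * z) :=
      Subgroup.mem_centralizer_iff.mp hcLs x hx
    have h2 : Commute (x⁻¹ * z⁻¹ * x * z) z :=
      Subgroup.mem_centralizer_iff.mp hzc _ hcmem.1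
    have h3 : Commute (x ^ n) z :=
      Subgroup.mem_centralizer_iff.mp hzc _ hxn
    exact commute_pow_aux x z n h1 h2 h3
  have keyH : ∀ x, x ∈ Hstar → x ^ n ∈ Lstar → ∀ z ∈ H, Commute x (z ^ n) := by
    intro x hx hxn z hz
    have hcmem : x⁻¹ * z⁻¹ * x * z ∈ L ⊓ Lstar := by
      have h := hcomm (Subgroup.commutator_mem_commutator
        (Subgroup.mem_sup_right (Hstar.inv_mem hx)) (Subgroup.mem_sup_left (H.inv_mem hz)))
      rwa [commutatorElement_def, inv_inv, inv_inv] at h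
    have hxc : x ∈ Subgroup.centralizer (L : Set G) := by
      rw [← hHstar]; exact hx
    have hcLs : x⁻¹ * z⁻¹ * x * z ∈ Subgroup.centralizer (H : Set G) := by
      rw [← hLstar]; exact hcmem.2
    have hxnc : x ^ n ∈ Subgroup.centralizer (H : Set G) := by
      rw [← hLstar]; exact hxn
    have h1 : Commute x (x⁻¹ * z⁻¹ * x * z) :=
      (Subgroup.mem_centralizer_iff.mp hxc _ hcmem.1).symm
    have h2 : Commute (x⁻¹ * z⁻¹ * x * z) z :=
      (Subgroup.mem_centralizer_iff.mp hcLs z hz).symm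
    have h3 : Commute (x ^ n) z :=
      (Subgroup.mem_centralizer_iff.mp hxnc z hz).symm
    exact commute_pow_aux x z n h1 h2 h3
  -- centralizer inclusions
  have I1 : BkHstar ≤ Subgroup.centralizer (AkH : Set G) := by
    rw [hAkH, centralizer_closure_eq, hBkHstar]
    apply sup_le
    · rw [hLstar]
      exact Subgroup.centralizer_le (fun x hx => hx.1)
    · rw [Subgroup.closure_le]
      rintro y ⟨z, hz, rfl⟩
      rw [SetLike.mem_coe, Subgroup.mem_centralizer_iff]
      rintro x ⟨hxH, hxn⟩
      exact keyHs x hxH hxn z hz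
  have I3 : BkH ≤ Subgroup.centralizer (AkHstar : Set G) := by
    rw [hAkHstar, centralizer_closure_eq, hBkH]
    apply sup_le
    · have hstep : L ≤ Subgroup.centralizer (Hstar : Set G) := by
        rw [Subgroup.le_centralizer_iff, ← hHstar]
      exact hstep.trans (Subgroup.centralizer_le (fun x hx => hx.1))
    · rw [Subgroup.closure_le]
      rintro y ⟨z, hz, rfl⟩
      rw [SetLike.mem_coe, Subgroup.mem_centralizer_iff]
      rintro x ⟨hxHs, hxn⟩
      exact keyH x hxHs hxn z hz
  have I2 : AkH ≤ Subgroup.centralizer (BkHstar : Set G) := Subgroup.le_centralizer_iff.mpr I1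
  have I4 : AkHstar ≤ Subgroup.centralizer (BkH : Set G) := Subgroup.le_centralizer_iff.mpr I3
  -- measures
  have hLHm : CDmeasure L = CDmeasure H := le_antisymm (hH L) (hL H)
  have hmH : CDmeasure H = Nat.card H * Nat.card Lstar := by
    rw [CDmeasure, hLstar]
  have hmL : CDmeasure L = Nat.card L * Nat.card Hstar := by
    rw [CDmeasure, hHstar]
  have posm : 0 < CDmeasure H := Nat.mul_pos Nat.card_pos Nat.card_pos
  have posA : 0 < Nat.card AkH := Nat.card_pos
  have posAs : 0 < Nat.card AkHstar := Nat.card_pos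
  have key1 : Nat.card AkH * Nat.card BkHstar ≤ CDmeasure H := by
    calc Nat.card AkH * Nat.card BkHstar
        ≤ Nat.card AkH * Nat.card (Subgroup.centralizer (AkH : Set G)) :=
          Nat.mul_le_mul le_rfl (Subgroup.card_le_of_le I1)
      _ = CDmeasure AkH := rfl
      _ ≤ CDmeasure H := hH AkH
  have key2 : Nat.card AkHstar * Nat.card BkH ≤ CDmeasure H := by
    calc Nat.card AkHstar * Nat.card BkH
        ≤ Nat.card AkHstar * Nat.card (Subgroup.centralizer (AkHstar : Set G)) :=
          Nat.mul_le_mul le_rfl (Subgroup.card_le_of_le I3)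
      _ = CDmeasure AkHstar := rfl
      _ ≤ CDmeasure H := hH AkHstar
  have prod : (Nat.card AkH * Nat.card BkHstar) * (Nat.card AkHstar * Nat.card BkH)
      = CDmeasure H * CDmeasure H := by
    calc (Nat.card AkH * Nat.card BkHstar) * (Nat.card AkHstar * Nat.card BkH)
        = (Nat.card AkH * Nat.card BkH) * (Nat.card AkHstar * Nat.card BkHstar) := by ring
      _ = (Nat.card L * Nat.card H) * (Nat.card Lstar * Nat.card Hstar) := by
          rw [cardAB, cardABs]
      _ = (Nat.card H * Nat.card Lstar) * (Nat.card L * Nat.card Hstar) := by ring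
      _ = CDmeasure H * CDmeasure L := by rw [hmH, hmL]
      _ = CDmeasure H * CDmeasure H := by rw [hLHm]
  have eq1 : Nat.card AkH * Nat.card BkHstar = CDmeasure H := by
    refine le_antisymm key1 ?_
    have h : CDmeasure H * CDmeasure H ≤ (Nat.card AkH * Nat.card BkHstar) * CDmeasure H := by
      calc CDmeasure H * CDmeasure H
          = (Nat.card AkH * Nat.card BkHstar) * (Nat.card AkHstar * Nat.card BkH) := prod.symm
        _ ≤ (Nat.card AkH * Nat.card BkHstar) * CDmeasure H := Nat.mul_le_mul le_rfl key2
    exact Nat.le_of_mul_le_mul_right h posm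
  have eq2 : Nat.card AkHstar * Nat.card BkH = CDmeasure H := by
    refine le_antisymm key2 ?_
    have h : CDmeasure H * CDmeasure H ≤ (Nat.card AkHstar * Nat.card BkH) * CDmeasure H := by
      calc CDmeasure H * CDmeasure H
          = (Nat.card AkHstar * Nat.card BkH) * (Nat.card AkH * Nat.card BkHstar) := by
            rw [← prod]; ring
        _ ≤ (Nat.card AkHstar * Nat.card BkH) * CDmeasure H := Nat.mul_le_mul le_rfl key1
    exact Nat.le_of_mul_le_mul_right h posm
  have mA : CDmeasure AkH = CDmeasure H := by
    refine le_antisymm (hH AkH) ?_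
    calc CDmeasure H = Nat.card AkH * Nat.card BkHstar := eq1.symm
      _ ≤ Nat.card AkH * Nat.card (Subgroup.centralizer (AkH : Set G)) :=
          Nat.mul_le_mul le_rfl (Subgroup.card_le_of_le I1)
      _ = CDmeasure AkH := rfl
  have mAs : CDmeasure AkHstar = CDmeasure H := by
    refine le_antisymm (hH AkHstar) ?_
    calc CDmeasure H = Nat.card AkHstar * Nat.card BkH := eq2.symm
      _ ≤ Nat.card AkHstar * Nat.card (Subgroup.centralizer (AkHstar : Set G)) :=
          Nat.mul_le_mul le_rfl (Subgroup.card_le_of_le I3)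
      _ = CDmeasure AkHstar := rfl
  have centA : Subgroup.centralizer (AkH : Set G) = BkHstar := by
    have h' : Nat.card AkH * Nat.card (Subgroup.centralizer (AkH : Set G))
        = Nat.card AkH * Nat.card BkHstar := by
      rw [eq1]; exact mA
    have hcard : Nat.card (Subgroup.centralizer (AkH : Set G)) ≤ Nat.card BkHstar :=
      le_of_eq (Nat.eq_of_mul_eq_mul_left posA h')
    exact (Subgroup.eq_of_le_of_card_ge I1 hcard).symm
  have centAs : Subgroup.centralizer (AkHstar : Set G) = BkH := by
    have h' : Nat.card AkHstar * Nat.card (Subgroup.centralizer (AkHstar : Set G))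
        = Nat.card AkHstar * Nat.card BkH := by
      rw [eq2]; exact mAs
    have hcard : Nat.card (Subgroup.centralizer (AkHstar : Set G)) ≤ Nat.card BkH :=
      le_of_eq (Nat.eq_of_mul_eq_mul_left posAs h')
    exact (Subgroup.eq_of_le_of_card_ge I3 hcard).symm
  have mB : CDmeasure H ≤ CDmeasure BkHstar := by
    calc CDmeasure H = Nat.card AkH * Nat.card BkHstar := eq1.symm
      _ = Nat.card BkHstar * Nat.card AkH := by ring
      _ ≤ Nat.card BkHstar * Nat.card (Subgroup.centralizer (BkHstar : Set G)) :=
          Nat.mul_le_mul le_rfl (Subgroup.card_le_of_le I2)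
      _ = CDmeasure BkHstar := rfl
  have mBs : CDmeasure H ≤ CDmeasure BkH := by
    calc CDmeasure H = Nat.card AkHstar * Nat.card BkH := eq2.symm
      _ = Nat.card BkH * Nat.card AkHstar := by ring
      _ ≤ Nat.card BkH * Nat.card (Subgroup.centralizer (BkH : Set G)) :=
          Nat.mul_le_mul le_rfl (Subgroup.card_le_of_le I4)
      _ = CDmeasure BkH := rfl
  refine ⟨fun K => (hH K).trans mA.ge, fun K => (hH K).trans mBs,
    fun K => (hH K).trans mAs.ge, fun K => (hH K).trans mB, centA, centAs⟩
end

section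
/- Let G be a finite group and L < H subgroups with L, H ∈ CD(G) such that the interval ⟦L,H⟧ in CD(G) is a quasi-antichain. If K1 and K2 are distinct atoms of this interval (that is, K1, K2 ∈ CD(G) with L < K_i < H and K1 ≠ K2), then K1 and K2 are each normalized by H, L is a normal subgroup of H, the commutator subgroup [K1, K2] is contained in L, and |K1|·|C_G(H)| = |L|·|C_G(K2)| (equivalently, the index of L in K1 equals the index of C_G(H) in C_G(K2)). -/
open scoped Pointwise

namespace Subgroup

variable {G : Type*} [Group G]

theorem centralizer_sup (A B : Subgroup G) :
    centralizer ((A ⊔ B : Subgroup G) : Set G) = centralizer A ⊓ centralizer B := by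
  rw [← closure_eq A, ← closure_eq B, ← closure_union, centralizer_closure, closure_eq,
    closure_eq]
  exact SetLike.ext' Set.centralizer_union

theorem card_mul_relIndex_of_le {A B : Subgroup G} (h : A ≤ B) :
    Nat.card A * A.relIndex B = Nat.card B := by
  simpa using relIndex_mul_relIndex ⊥ A B bot_le h

theorem card_mul_card_eq_card_inf_mul_card_mul_relIndex (A B : Subgroup G) :
    Nat.card A * Nat.card B = Nat.card (A ⊓ B : Subgroup G) * Nat.card B * B.relIndex A := by
  rw [← inf_relIndex_left, ← card_mul_relIndex_of_le inf_le_left]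
  ring

theorem card_sup_mul_card_inf_eq_card_inf_mul_card_mul_relIndex (A B : Subgroup G) :
    Nat.card (A ⊔ B : Subgroup G) * Nat.card (A ⊓ B : Subgroup G) =
      Nat.card (A ⊓ B : Subgroup G) * Nat.card B * B.relIndex (A ⊔ B) := by
  rw [← card_mul_relIndex_of_le le_sup_right]
  ring

theorem card_mul_card_le_card_sup_mul_card_inf [Finite G] (A B : Subgroup G) :
    Nat.card A * Nat.card B ≤ Nat.card (A ⊔ B : Subgroup G) * Nat.card (A ⊓ B : Subgroup G) := by
  rw [card_mul_card_eq_card_inf_mul_card_mul_relIndex A B,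
    card_sup_mul_card_inf_eq_card_inf_mul_card_mul_relIndex A B]
  gcongr
  exact relIndex_le_of_le_right le_sup_left
    (FiniteIndex.index_ne_zero (H := B.subgroupOf (A ⊔ B)))

/-- The embedding `A ⧸ (A ⊓ B) ↪ (A ⊔ B) ⧸ B` of coset spaces is then a bijection. -/
theorem exists_mul_eq_of_card_sup_mul_card_inf_eq [Finite G] {A B : Subgroup G}
    (h : Nat.card (A ⊔ B : Subgroup G) * Nat.card (A ⊓ B : Subgroup G) = Nat.card A * Nat.card B)
    {x : G} (hx : x ∈ A ⊔ B) : ∃ a ∈ A, ∃ b ∈ B, a * b = x := by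
  rw [card_mul_card_eq_card_inf_mul_card_mul_relIndex A B,
    card_sup_mul_card_inf_eq_card_inf_mul_card_mul_relIndex A B] at h
  have hrel : B.relIndex (A ⊔ B) = B.relIndex A :=
    Nat.eq_of_mul_eq_mul_left (mul_pos Nat.card_pos Nat.card_pos) h
  have hsurj := ((quotientSubgroupOfEmbeddingOfLE B (le_sup_left : A ≤ A ⊔ B)).injective
    |>.bijective_of_nat_card_le hrel.le).2
  obtain ⟨q, hq⟩ := hsurj (QuotientGroup.mk ⟨x, hx⟩)
  obtain ⟨a, rfl⟩ := QuotientGroup.mk_surjective q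
  rw [quotientSubgroupOfEmbeddingOfLE_apply_mk, QuotientGroup.eq, mem_subgroupOf] at hq
  exact ⟨a, a.2, _, hq, mul_inv_cancel_left _ _⟩

theorem card_pointwise_smul {α : Type*} [Group α] [MulDistribMulAction α G] (a : α)
    (K : Subgroup G) : Nat.card (a • K : Subgroup G) = Nat.card K :=
  (Nat.card_congr (equivSMul a K).toEquiv).symm

theorem centralizer_pointwise_smul {α : Type*} [Group α] [MulDistribMulAction α G] (a : α)
    (K : Subgroup G) :
    centralizer ((a • K : Subgroup G) : Set G) = a • centralizer (K : Set G) := by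
  ext y
  rw [mem_pointwise_smul_iff_inv_smul_mem, mem_centralizer_iff, mem_centralizer_iff,
    coe_pointwise_smul, ← Set.image_smul, Set.forall_mem_image]
  refine forall₂_congr fun h _ ↦ ?_
  rw [← (MulAction.injective a⁻¹).eq_iff, smul_mul', smul_mul', inv_smul_smul]

open ConjAct in
theorem toConjAct_smul_eq_self_of_mem_mul {K : Subgroup G} {y k : G}
    (hy : y ∈ toConjAct (y * k) • K) (hk : k ∈ K) : toConjAct (y * k) • K = K := by
  have hK : toConjAct (y * k) • K = toConjAct y • K := by
    rw [map_mul, mul_smul, conjAct_pointwise_smul_eq_self (le_normalizer hk)]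
  have hyK : y ∈ K := by
    rw [hK, mem_pointwise_smul_iff_inv_smul_mem, ← map_inv, toConjAct_smul] at hy
    simpa using hy
  rw [hK, conjAct_pointwise_smul_eq_self (le_normalizer hyK)]

theorem commutator_le_inf_of_le_normalizer {K₁ K₂ : Subgroup G} (h₁ : K₂ ≤ normalizer K₁)
    (h₂ : K₁ ≤ normalizer K₂) : ⁅K₁, K₂⁆ ≤ K₁ ⊓ K₂ := by
  rw [commutator_le]
  intro a ha b hb
  rw [commutatorElement_def]
  refine mem_inf.mpr ⟨?_, ?_⟩
  · rw [mul_assoc, mul_assoc, mul_mem_cancel_left ha, ← mul_assoc]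
    exact (mem_normalizer_iff.mp (h₁ hb) _).mp (inv_mem ha)
  · exact mul_mem ((mem_normalizer_iff.mp (h₂ ha) _).mp hb) (inv_mem hb)

theorem relIndex_eq_relIndex_of_card_mul_eq [Finite G] {A B C D : Subgroup G} (hAB : A ≤ B)
    (hCD : C ≤ D) (h : Nat.card B * Nat.card C = Nat.card A * Nat.card D) :
    A.relIndex B = C.relIndex D := by
  rw [← card_mul_relIndex_of_le hAB, ← card_mul_relIndex_of_le hCD] at h
  refine Nat.eq_of_mul_eq_mul_left (mul_pos (Nat.card_pos (α := A)) (Nat.card_pos (α := C))) ?_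
  linear_combination h

end Subgroup

section ChermakDelgado

open Subgroup

variable {G : Type*} [Group G]

theorem CDmeasure_pos [Finite G] (A : Subgroup G) : 0 < CDmeasure A :=
  mul_pos Nat.card_pos Nat.card_pos

theorem card_centralizer_mul_card_centralizer_le [Finite G] (A B : Subgroup G) :
    Nat.card (centralizer (A : Set G)) * Nat.card (centralizer (B : Set G)) ≤
      Nat.card (centralizer ((A ⊔ B : Subgroup G) : Set G)) *
        Nat.card (centralizer ((A ⊓ B : Subgroup G) : Set G)) := by
  have hinf : centralizer (A : Set G) ⊔ centralizer (B : Set G) ≤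
      centralizer ((A ⊓ B : Subgroup G) : Set G) :=
    sup_le (centralizer_le inf_le_left) (centralizer_le inf_le_right)
  calc Nat.card (centralizer (A : Set G)) * Nat.card (centralizer (B : Set G))
      ≤ Nat.card (centralizer (A : Set G) ⊔ centralizer (B : Set G) : Subgroup G) *
          Nat.card (centralizer (A : Set G) ⊓ centralizer (B : Set G) : Subgroup G) :=
        card_mul_card_le_card_sup_mul_card_inf _ _
    _ ≤ Nat.card (centralizer ((A ⊓ B : Subgroup G) : Set G)) *
          Nat.card (centralizer ((A ⊔ B : Subgroup G) : Set G)) := by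
        rw [centralizer_sup]
        gcongr
        exact card_le_of_le hinf
    _ = _ := mul_comm _ _

theorem CDmeasure_mul_le [Finite G] (A B : Subgroup G) :
    CDmeasure A * CDmeasure B ≤ CDmeasure (A ⊔ B) * CDmeasure (A ⊓ B) := by
  unfold CDmeasure
  calc _ = (Nat.card A * Nat.card B) *
        (Nat.card (centralizer (A : Set G)) * Nat.card (centralizer (B : Set G))) := by ring
    _ ≤ (Nat.card (A ⊔ B : Subgroup G) * Nat.card (A ⊓ B : Subgroup G)) *
        (Nat.card (centralizer ((A ⊔ B : Subgroup G) : Set G)) *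
          Nat.card (centralizer ((A ⊓ B : Subgroup G) : Set G))) :=
      mul_le_mul' (card_mul_card_le_card_sup_mul_card_inf A B)
        (card_centralizer_mul_card_centralizer_le A B)
    _ = _ := by ring

theorem CDmeasure_pointwise_smul {α : Type*} [Group α] [MulDistribMulAction α G] (a : α)
    (A : Subgroup G) : CDmeasure (a • A) = CDmeasure A := by
  rw [CDmeasure, CDmeasure, centralizer_pointwise_smul, card_pointwise_smul, card_pointwise_smul]

namespace inCD

variable {A B : Subgroup G}

theorem CDmeasure_eq (hA : inCD A) (hB : inCD B) : CDmeasure A = CDmeasure B :=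
  le_antisymm (hB A) (hA B)

theorem pointwise_smul {α : Type*} [Group α] [MulDistribMulAction α G] (hA : inCD A) (a : α) :
    inCD (a • A) := fun K ↦ by
  rw [CDmeasure_pointwise_smul, ← CDmeasure_pointwise_smul a⁻¹ K]
  exact hA _

theorem CDmeasure_sup_eq_and_CDmeasure_inf_eq [Finite G] (hA : inCD A) (hB : inCD B) :
    CDmeasure (A ⊔ B) = CDmeasure A ∧ CDmeasure (A ⊓ B) = CDmeasure B :=
  (mul_eq_mul_iff_eq_and_eq_of_pos (hA _) (hB _) (CDmeasure_pos _) (CDmeasure_pos _)).mp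
    (le_antisymm (mul_le_mul' (hA _) (hB _)) (CDmeasure_mul_le A B))

theorem sup [Finite G] (hA : inCD A) (hB : inCD B) : inCD (A ⊔ B) := fun K ↦
  (hA K).trans_eq (hA.CDmeasure_sup_eq_and_CDmeasure_inf_eq hB).1.symm

theorem inf [Finite G] (hA : inCD A) (hB : inCD B) : inCD (A ⊓ B) := fun K ↦
  (hB K).trans_eq (hA.CDmeasure_sup_eq_and_CDmeasure_inf_eq hB).2.symm

/-- Both factors of `CDmeasure_mul_le` are inequalities, so both are equalities here. -/
theorem card_sup_mul_card_inf [Finite G] (hA : inCD A) (hB : inCD B) :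
    Nat.card (A ⊔ B : Subgroup G) * Nat.card (A ⊓ B : Subgroup G) = Nat.card A * Nat.card B := by
  have hmeasure := le_antisymm (mul_le_mul' (hA (A ⊔ B)) (hB (A ⊓ B))) (CDmeasure_mul_le A B)
  unfold CDmeasure at hmeasure
  refine ((mul_eq_mul_iff_eq_and_eq_of_pos (card_mul_card_le_card_sup_mul_card_inf A B)
    (card_centralizer_mul_card_centralizer_le A B) (mul_pos Nat.card_pos Nat.card_pos)
    (mul_pos Nat.card_pos Nat.card_pos)).mp ?_).1.symm
  linear_combination hmeasure.symm

end inCD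

end ChermakDelgado

section Interval

open Subgroup

variable {G : Type*} [Group G]

def CDIntervalIsAntichain (L H : Subgroup G) : Prop :=
  ∀ K K' : Subgroup G, inCD K → inCD K' → L < K → K ≤ K' → K' < H → K = K'

namespace CDIntervalIsAntichain

variable {L H K K' : Subgroup G}

theorem sup_eq [Finite G] (hLH : CDIntervalIsAntichain L H) (hK : inCD K) (hK' : inCD K')
    (hLK : L < K) (hKH : K < H) (hK'H : K' ≤ H) (hK'K : ¬K' ≤ K) : K ⊔ K' = H := by
  by_contra hne
  have hKK' := hLH K (K ⊔ K') hK (hK.sup hK') hLK le_sup_left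
    (lt_of_le_of_ne (sup_le hKH.le hK'H) hne)
  exact hK'K (le_sup_right.trans hKK'.ge)

theorem inf_eq [Finite G] (hLH : CDIntervalIsAntichain L H) (hK : inCD K) (hK' : inCD K')
    (hLK : L ≤ K) (hLK' : L ≤ K') (hKH : K < H) (hKK' : ¬K ≤ K') : K ⊓ K' = L := by
  by_contra hne
  have hmeet := hLH (K ⊓ K') K (hK.inf hK') hK
    (lt_of_le_of_ne (le_inf hLK hLK') (Ne.symm hne)) inf_le_left hKH
  exact hKK' (hmeet.ge.trans inf_le_right)

open ConjAct in
theorem le_normalizer [Finite G] (hLH : CDIntervalIsAntichain L H) (hK : inCD K) (hLK : L < K)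
    (hKH : K < H) : H ≤ normalizer (K : Set G) := by
  intro x hx
  rw [← conjAct_pointwise_smul_iff]
  by_contra hne
  have hKx : toConjAct x • K ≤ H := by
    rw [← conjAct_pointwise_smul_eq_self (Subgroup.le_normalizer hx)]
    exact pointwise_smul_le_pointwise_smul_iff.mpr hKH.le
  have hnle : ¬toConjAct x • K ≤ K := fun hle ↦
    hne (eq_of_le_of_card_ge hle (card_pointwise_smul _ K).ge)
  have hsup := hLH.sup_eq hK (hK.pointwise_smul _) hLK hKH hKx hnle
  rw [sup_comm] at hsup
  obtain ⟨y, hy, k, hk, rfl⟩ := exists_mul_eq_of_card_sup_mul_card_inf_eq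
    ((hK.pointwise_smul (toConjAct x)).card_sup_mul_card_inf hK) (hsup ▸ hx)
  exact hne (toConjAct_smul_eq_self_of_mem_mul hy hk)

end CDIntervalIsAntichain

end Interval

theorem stmt1_general {G : Type*} [Group G] [Finite G] (L H : Subgroup G)
    (hH : inCD H)
    (hqa : ∀ K K' : Subgroup G, inCD K → inCD K' → L < K → K ≤ K' → K' < H → K = K')
    (K1 K2 : Subgroup G) (hK1 : inCD K1) (hK2 : inCD K2)
    (hK1L : L < K1) (hK1H : K1 < H) (hK2L : L < K2) (hK2H : K2 < H)
    (hne : K1 ≠ K2) :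
    H ≤ Subgroup.normalizer (K1 : Set G) ∧ H ≤ Subgroup.normalizer (K2 : Set G) ∧
    H ≤ Subgroup.normalizer (L : Set G) ∧
    ⁅K1, K2⁆ ≤ L ∧
    Nat.card K1 * Nat.card (Subgroup.centralizer (H : Set G)) =
      Nat.card L * Nat.card (Subgroup.centralizer (K2 : Set G)) ∧
    L.relIndex K1 =
      (Subgroup.centralizer (H : Set G)).relIndex (Subgroup.centralizer (K2 : Set G)) := by
  have hanti : CDIntervalIsAntichain L H := hqa
  have hsup : K1 ⊔ K2 = H := hanti.sup_eq hK1 hK2 hK1L hK1H hK2H.le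
    fun h ↦ hne (hqa K2 K1 hK2 hK1 hK2L h hK1H).symm
  have hinf : K1 ⊓ K2 = L := hanti.inf_eq hK1 hK2 hK1L.le hK2L.le hK1H
    fun h ↦ hne (hqa K1 K2 hK1 hK2 hK1L h hK2H)
  have hN1 := hanti.le_normalizer hK1 hK1L hK1H
  have hN2 := hanti.le_normalizer hK2 hK2L hK2H
  have hcard : Nat.card K1 * Nat.card (Subgroup.centralizer (H : Set G)) =
      Nat.card L * Nat.card (Subgroup.centralizer (K2 : Set G)) := by
    have hprod := hK1.card_sup_mul_card_inf hK2
    have hmeasure := hK2.CDmeasure_eq hH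
    rw [hsup, hinf] at hprod
    unfold CDmeasure at hmeasure
    refine Nat.eq_of_mul_eq_mul_left (Nat.card_pos (α := K2)) ?_
    linear_combination Nat.card (Subgroup.centralizer (H : Set G)) * hprod.symm +
      Nat.card L * hmeasure.symm
  refine ⟨hN1, hN2, hinf ▸ le_trans (le_inf hN1 hN2) Subgroup.inf_normalizer_le_normalizer_inf,
    hinf ▸ Subgroup.commutator_le_inf_of_le_normalizer (hK2H.le.trans hN1) (hK1H.le.trans hN2),
    hcard, Subgroup.relIndex_eq_relIndex_of_card_mul_eq hK1L.le
      (Subgroup.centralizer_le hK2H.le) hcard⟩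

/-- if the interval `⟦L,H⟧` in `CD(G)` is a quasi-antichain and
`K1 ≠ K2` are atoms of the interval, then `K1`, `K2` are normalized by `H`,
`L` is normal in `H`, `[K1,K2] ≤ L`, and `|K1|·|C_G(H)| = |L|·|C_G(K2)|`,
equivalently `|K1 : L| = |C_G(K2) : C_G(H)|`. -/
theorem stmt1 {G : Type*} [Group G] [Finite G] (L H : Subgroup G) (hLH : L < H)
    (hL : inCD L) (hH : inCD H)
    (hqa : ∀ K K' : Subgroup G, inCD K → inCD K' → L < K → K ≤ K' → K' < H → K = K')
    (K1 K2 : Subgroup G) (hK1 : inCD K1) (hK2 : inCD K2)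
    (hK1L : L < K1) (hK1H : K1 < H) (hK2L : L < K2) (hK2H : K2 < H)
    (hne : K1 ≠ K2) :
    H ≤ Subgroup.normalizer (K1 : Set G) ∧ H ≤ Subgroup.normalizer (K2 : Set G) ∧
    H ≤ Subgroup.normalizer (L : Set G) ∧
    ⁅K1, K2⁆ ≤ L ∧
    Nat.card K1 * Nat.card (Subgroup.centralizer (H : Set G)) =
      Nat.card L * Nat.card (Subgroup.centralizer (K2 : Set G)) ∧
    L.relIndex K1 =
      (Subgroup.centralizer (H : Set G)).relIndex (Subgroup.centralizer (K2 : Set G)) :=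
  stmt1_general L H hH hqa K1 K2 hK1 hK2 hK1L hK1H hK2L hK2H hne
end

section
/- Let G be a finite group and L < H subgroups with L, H ∈ CD(G) such that the interval ⟦L,H⟧ in CD(G) is a quasi-antichain having at least three pairwise distinct atoms. Write H* = C_G(L) and L* = C_G(H). Then the commutator subgroup [H, H*] is contained in L ∩ L*, and L ∩ L* = C_G(⟨H ∪ H*⟩). -/
/-!
In `CD(G)` the map `K ↦ C_G(K)` is an order-reversing involution, and `CD(G)` is a sublattice
of the subgroup lattice in which `X ⊔ Y = XY`: both follow from `m(X) m(Y) ≤ m(X ⊔ Y) m(X ⊓ Y)`,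
a consequence of `|X| |Y| ≤ |XY| |X ∩ Y|` applied to `X, Y` and to their centralizers.
Hence `C_G` maps `⟦L, H⟧` onto the quasi-antichain `⟦L*, H*⟧` with atoms `C_G(Kᵢ)`.

A covering pair `X < Y` of `CD(G)` is a normal inclusion. So `H` normalizes every atom `Kᵢ`,
and `H*` normalizes every `C_G(Kᵢ)`, hence every `Kᵢ = C_G(C_G(Kᵢ))`. From `H = Kⱼ Kᵢ` for
`i ≠ j` we get `[H, C_G(Kⱼ)] ≤ Kᵢ`; intersecting over the two atoms other than `Kⱼ` gives
`[H, C_G(Kⱼ)] ≤ L`, and since `H* = C_G(K₁) C_G(K₂)` centralizes `L`, `[H, H*] ≤ L`.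
The dual interval gives `[H*, H] ≤ L*`. Finally `C_G(H ⊔ H*) = C_G(H) ∩ C_G(C_G(L)) = L* ∩ L`.
-/

open Subgroup Pointwise
open scoped commutatorElement

section

variable {G : Type*} [Group G]

theorem centralizer_sup_eq_inf (X Y : Subgroup G) :
    centralizer ((X ⊔ Y : Subgroup G) : Set G) =
      centralizer (X : Set G) ⊓ centralizer (Y : Set G) := by
  rw [sup_eq_closure, centralizer_closure]
  exact SetLike.ext' (Set.centralizer_union ..)

theorem commutator_centralizer_eq_bot (X : Subgroup G) : ⁅X, centralizer (X : Set G)⁆ = ⊥ :=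
  commutator_eq_bot_iff_le_centralizer.mpr (le_centralizer_iff.mpr le_rfl)

theorem mul_subset_centralizer_inf (X Y : Subgroup G) :
    (centralizer (X : Set G) : Set G) * centralizer (Y : Set G) ⊆
      centralizer ((X ⊓ Y : Subgroup G) : Set G) := by
  rintro _ ⟨a, ha, b, hb, rfl⟩ h hh
  rw [← mul_assoc, ha h hh.1, mul_assoc, hb h hh.2, mul_assoc]

theorem map_centralizer_le_centralizer_map {G' : Type*} [Group G'] (f : G →* G')
    (X : Subgroup G) :
    (centralizer (X : Set G)).map f ≤ centralizer ((X.map f : Subgroup G') : Set G') := by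
  simpa only [coe_map] using map_centralizer_le_centralizer_image (X : Set G) f

theorem normalizer_le_normalizer_centralizer [Finite G] (X : Subgroup G) :
    normalizer (X : Set G) ≤ normalizer (centralizer (X : Set G) : Set G) := by
  intro g hg
  rw [mem_normalizer_iff_map_conj_eq] at hg ⊢
  have h := map_centralizer_le_centralizer_map (MulAut.conj g : G →* G) X
  rw [hg] at h
  exact eq_of_le_of_card_ge h (card_map_of_injective (MulAut.conj g).injective).ge

theorem commutator_sup_le_of_le_normalizer {X Y Z N : Subgroup G} (hX : ⁅X, Z⁆ ≤ N)
    (hY : ⁅Y, Z⁆ ≤ N) (hN : X ⊔ Y ≤ normalizer (N : Set G)) : ⁅X ⊔ Y, Z⁆ ≤ N := by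
  rw [commutator_le]
  intro g hg z hz
  rw [sup_eq_closure] at hg hN
  suffices g ∈ normalizer (N : Set G) ∧ ⁅g, z⁆ ∈ N from this.2
  induction hg using closure_induction with
  | mem x hx =>
    refine ⟨hN (subset_closure hx), ?_⟩
    rcases hx with hx | hx
    exacts [commutator_le.mp hX x hx z hz, commutator_le.mp hY x hx z hz]
  | one => simp
  | mul x y _ _ hx hy =>
    refine ⟨mul_mem hx.1 hy.1, ?_⟩
    have hxyz : ⁅x * y, z⁆ = x * ⁅y, z⁆ * x⁻¹ * ⁅x, z⁆ := by
      simp only [commutatorElement_def]; group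
    rw [hxyz]
    exact mul_mem ((mem_normalizer_iff.mp hx.1 _).mp hy.2) hx.2
  | inv x _ hx =>
    refine ⟨inv_mem hx.1, ?_⟩
    have hxz : ⁅x⁻¹, z⁆ = x⁻¹ * ⁅x, z⁆⁻¹ * x⁻¹⁻¹ := by
      simp only [commutatorElement_def]; group
    rw [hxz]
    exact (mem_normalizer_iff.mp (inv_mem hx.1) _).mp (inv_mem hx.2)

theorem card_mul_card_le_card_mul_mul_card_inf [Finite G] (X Y : Subgroup G) :
    Nat.card X * Nat.card Y ≤
      Nat.card ((X : Set G) * Y : Set G) * Nat.card (X ⊓ Y : Subgroup G) := by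
  have hsplit : ∀ z : ((X : Set G) * Y : Set G), ∃ x : X, (x : G)⁻¹ * z ∈ Y := by
    rintro ⟨_, x, hx, y, hy, rfl⟩
    exact ⟨⟨x, hx⟩, by simpa [← mul_assoc] using hy⟩
  choose s hs using hsplit
  let pairMul (p : X × Y) : ((X : Set G) * Y : Set G) := ⟨p.1 * p.2, Set.mul_mem_mul p.1.2 p.2.2⟩
  have hmem (p : X × Y) : (s (pairMul p) : G)⁻¹ * p.1 ∈ X ⊓ Y := by
    refine mem_inf.mpr ⟨mul_mem (inv_mem (s _).2) p.1.2, ?_⟩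
    rw [show (s (pairMul p) : G)⁻¹ * p.1 = (s (pairMul p) : G)⁻¹ * (p.1 * p.2) * (p.2 : G)⁻¹ by
      group]
    exact mul_mem (hs _) (inv_mem p.2.2)
  let f (p : X × Y) : ((X : Set G) * Y : Set G) × (X ⊓ Y : Subgroup G) :=
    (pairMul p, ⟨_, hmem p⟩)
  have hf : Function.Injective f := by
    rintro p q hpq
    obtain ⟨hprod, hquot⟩ := Prod.ext_iff.mp hpq
    have hquot : (s (pairMul p) : G)⁻¹ * p.1 = (s (pairMul q) : G)⁻¹ * q.1 :=
      congrArg Subtype.val hquot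
    rw [show pairMul p = pairMul q from hprod, mul_right_inj] at hquot
    have hprod : (p.1 : G) * p.2 = q.1 * q.2 := congrArg Subtype.val hprod
    rw [hquot, mul_right_inj] at hprod
    exact Prod.ext (Subtype.ext hquot) (Subtype.ext hprod)
  simpa only [Nat.card_prod] using Nat.card_le_card_of_injective f hf

end

section

variable {G : Type*} [Group G] {X Y : Subgroup G}

theorem inCD.measure_eq (hX : inCD X) (hY : inCD Y) : CDmeasure X = CDmeasure Y :=
  le_antisymm (hY X) (hX Y)

theorem inCD.of_measure_le (hX : inCD X) (h : CDmeasure X ≤ CDmeasure Y) : inCD Y :=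
  fun K => (hX K).trans h

variable [Finite G]

theorem CDmeasure_le_CDmeasure_centralizer (X : Subgroup G) :
    CDmeasure X ≤ CDmeasure (centralizer (X : Set G)) := by
  rw [CDmeasure, CDmeasure, mul_comm]
  exact Nat.mul_le_mul_left _ (card_le_of_le (le_centralizer_iff.mpr le_rfl))

theorem inCD.centralizer (hX : inCD X) : inCD (centralizer (X : Set G)) :=
  hX.of_measure_le (CDmeasure_le_CDmeasure_centralizer X)

theorem inCD.centralizer_centralizer (hX : inCD X) :
    Subgroup.centralizer (Subgroup.centralizer (X : Set G) : Set G) = X := by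
  have hm := hX.centralizer.measure_eq hX
  rw [CDmeasure, CDmeasure, mul_comm (Nat.card X)] at hm
  exact (eq_of_le_of_card_ge (le_centralizer_iff.mpr le_rfl)
    (Nat.eq_of_mul_eq_mul_left Nat.card_pos hm).le).symm

theorem inCD.centralizer_le_centralizer_iff (hX : inCD X) (hY : inCD Y) :
    Subgroup.centralizer (Y : Set G) ≤ Subgroup.centralizer (X : Set G) ↔ X ≤ Y := by
  refine ⟨fun h => ?_, fun h => centralizer_le h⟩
  simpa only [hX.centralizer_centralizer, hY.centralizer_centralizer] using centralizer_le h

theorem inCD.centralizer_lt_centralizer_iff (hX : inCD X) (hY : inCD Y) :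
    Subgroup.centralizer (Y : Set G) < Subgroup.centralizer (X : Set G) ↔ X < Y := by
  simp only [lt_iff_le_not_ge, hX.centralizer_le_centralizer_iff hY,
    hY.centralizer_le_centralizer_iff hX]

theorem inCD.centralizer_inj (hX : inCD X) (hY : inCD Y) :
    Subgroup.centralizer (X : Set G) = Subgroup.centralizer (Y : Set G) ↔ X = Y := by
  simp only [le_antisymm_iff, hX.centralizer_le_centralizer_iff hY,
    hY.centralizer_le_centralizer_iff hX, and_comm]

theorem inCD.map (hX : inCD X) (e : G ≃* G) : inCD (X.map (e : G →* G)) := by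
  refine hX.of_measure_le ?_
  rw [CDmeasure, CDmeasure, ← card_map_of_injective (K := X) (f := (e : G →* G)) e.injective,
    ← card_map_of_injective (K := Subgroup.centralizer (X : Set G)) (f := (e : G →* G))
      e.injective]
  exact Nat.mul_le_mul_left _ (card_le_of_le (map_centralizer_le_centralizer_map _ X))

theorem CDmeasure_mul_le_s3 (X Y : Subgroup G) :
    CDmeasure X * CDmeasure Y * Nat.card (X ⊔ Y : Subgroup G) ≤
      CDmeasure (X ⊔ Y) * CDmeasure (X ⊓ Y) * Nat.card ((X : Set G) * Y : Set G) := by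
  have hX := card_mul_card_le_card_mul_mul_card_inf X Y
  have hC := card_mul_card_le_card_mul_mul_card_inf (centralizer (X : Set G)) (centralizer Y)
  have hCX : Nat.card ((centralizer (X : Set G) : Set G) * centralizer (Y : Set G) : Set G) ≤
      Nat.card (centralizer ((X ⊓ Y : Subgroup G) : Set G)) :=
    Nat.card_mono (Set.toFinite _) (mul_subset_centralizer_inf X Y)
  rw [CDmeasure, CDmeasure, CDmeasure, CDmeasure, centralizer_sup_eq_inf]
  have key := Nat.mul_le_mul hX (hC.trans (Nat.mul_le_mul_right _ hCX))
  calc _ = Nat.card X * Nat.card Y * (Nat.card (centralizer (X : Set G)) *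
          Nat.card (centralizer (Y : Set G))) * Nat.card (X ⊔ Y : Subgroup G) := by ring
    _ ≤ _ := Nat.mul_le_mul_right _ key
    _ = _ := by ring

theorem inCD.measure_sup_inf (hX : inCD X) (hY : inCD Y) :
    CDmeasure (X ⊔ Y) = CDmeasure X ∧ CDmeasure (X ⊓ Y) = CDmeasure X ∧
      Nat.card ((X : Set G) * Y : Set G) = Nat.card (X ⊔ Y : Subgroup G) := by
  have key := CDmeasure_mul_le_s3 X Y
  rw [← hX.measure_eq hY] at key
  have hsup := hX (X ⊔ Y)
  have hinf := hX (X ⊓ Y)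
  have hcard : Nat.card ((X : Set G) * Y : Set G) ≤ Nat.card (X ⊔ Y : Subgroup G) :=
    Nat.card_mono (Set.toFinite _) (sup_eq_closure_mul X Y ▸ subset_closure)
  have hM : 0 < CDmeasure X := Nat.mul_pos Nat.card_pos Nat.card_pos
  have hs : 0 < Nat.card (X ⊔ Y : Subgroup G) := Nat.card_pos
  have hp : Nat.card ((X : Set G) * Y : Set G) = Nat.card (X ⊔ Y : Subgroup G) := by
    nlinarith [Nat.mul_le_mul hsup hinf]
  rw [hp] at key
  have hab := Nat.le_of_mul_le_mul_right key hs
  exact ⟨le_antisymm hsup (by nlinarith), le_antisymm hinf (by nlinarith), hp⟩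

theorem inCD.sup_s3 (hX : inCD X) (hY : inCD Y) : inCD (X ⊔ Y) :=
  hX.of_measure_le (hX.measure_sup_inf hY).1.ge

theorem inCD.inf_s3 (hX : inCD X) (hY : inCD Y) : inCD (X ⊓ Y) :=
  hX.of_measure_le (hX.measure_sup_inf hY).2.1.ge

theorem inCD.coe_sup (hX : inCD X) (hY : inCD Y) :
    ((X ⊔ Y : Subgroup G) : Set G) = (X : Set G) * Y := by
  refine (Set.eq_of_subset_of_ncard_le (sup_eq_closure_mul X Y ▸ subset_closure) ?_).symm
  rw [← Nat.card_coe_set_eq, ← Nat.card_coe_set_eq, SetLike.coe_sort_coe]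
  exact (hX.measure_sup_inf hY).2.2.ge

/-- The conjugate `X ^ y` lies in `CD(G)`, so `X ^ y ⊔ X = X ^ y * X` lies in `CD(G)` between
`X` and `Y`: either it is `X`, or it is `Y` and then `y ∈ X ^ y * X` forces `y ∈ X`. -/
theorem inCD.le_normalizer (hX : inCD X) (hXY : X ≤ Y)
    (hcov : ∀ Z : Subgroup G, inCD Z → X ≤ Z → Z < Y → Z = X) :
    Y ≤ normalizer (X : Set G) := by
  intro y hy
  rw [mem_normalizer_iff_map_conj_eq]
  set Xy := X.map (MulAut.conj y : G →* G)
  suffices h : Xy ≤ X from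
    eq_of_le_of_card_ge h (card_map_of_injective (MulAut.conj y).injective).ge
  have hXy : inCD Xy := hX.map _
  have hXyY : Xy ⊔ X ≤ Y := by
    refine sup_le ?_ hXY
    rintro _ ⟨x, hx, rfl⟩
    exact mul_mem (mul_mem hy (hXY hx)) (inv_mem hy)
  rcases hXyY.lt_or_eq with hlt | heq
  · exact le_sup_left.trans (hcov _ (hXy.sup_s3 hX) le_sup_right hlt).le
  · have hyXyX : y ∈ ((Xy ⊔ X : Subgroup G) : Set G) := heq ▸ hy
    rw [hXy.coe_sup hX] at hyXyX
    obtain ⟨_, ⟨a, ha, rfl⟩, b, hb, hab⟩ := hyXyX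
    have hyX : y ∈ X := by
      have hba : b * a = y := by
        simp only [MonoidHom.coe_coe, MulAut.conj_apply] at hab
        calc b * a = y * a⁻¹ * y⁻¹ * (y * a * y⁻¹ * b) * a := by group
          _ = y := by rw [hab]; group
      exact hba ▸ mul_mem hb ha
    rintro _ ⟨x, hx, rfl⟩
    exact mul_mem (mul_mem hyX hx) (inv_mem hyX)

end

section

variable {G : Type*} [Group G]

def IsCDQuasiAntichain (L H : Subgroup G) : Prop :=
  ∀ K K' : Subgroup G, inCD K → inCD K' → L < K → K ≤ K' → K' < H → K = K'

def IsCDAtom (L H K : Subgroup G) : Prop :=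
  inCD K ∧ L < K ∧ K < H

variable [Finite G] {L H K K' : Subgroup G}

theorem IsCDAtom.centralizer (hL : inCD L) (hH : inCD H) (hK : IsCDAtom L H K) :
    IsCDAtom (Subgroup.centralizer (H : Set G)) (Subgroup.centralizer (L : Set G))
      (Subgroup.centralizer (K : Set G)) :=
  ⟨hK.1.centralizer, (hK.1.centralizer_lt_centralizer_iff hH).mpr hK.2.2,
    (hL.centralizer_lt_centralizer_iff hK.1).mpr hK.2.1⟩

namespace IsCDQuasiAntichain

theorem le_normalizer (hqa : IsCDQuasiAntichain L H) (hK : IsCDAtom L H K) :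
    H ≤ normalizer (K : Set G) :=
  hK.1.le_normalizer hK.2.2.le fun Z hZ hKZ hZH => (hqa K Z hK.1 hZ hK.2.1 hKZ hZH).symm

theorem sup_eq (hqa : IsCDQuasiAntichain L H) (hK : IsCDAtom L H K) (hK' : IsCDAtom L H K')
    (hne : K ≠ K') : K ⊔ K' = H := by
  by_contra h
  have hlt : K ⊔ K' < H := (sup_le hK.2.2.le hK'.2.2.le).lt_of_ne h
  have hK_eq : K = K ⊔ K' := hqa _ _ hK.1 (hK.1.sup_s3 hK'.1) hK.2.1 le_sup_left hlt
  exact hne (hqa _ _ hK'.1 hK.1 hK'.2.1 (le_sup_right.trans hK_eq.ge) hK.2.2).symm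

theorem inf_eq (hqa : IsCDQuasiAntichain L H) (hK : IsCDAtom L H K) (hK' : IsCDAtom L H K')
    (hne : K ≠ K') : K ⊓ K' = L := by
  by_contra h
  have hlt : L < K ⊓ K' := (le_inf hK.2.1.le hK'.2.1.le).lt_of_ne (Ne.symm h)
  have hK_eq : K ⊓ K' = K := hqa _ _ (hK.1.inf_s3 hK'.1) hK.1 hlt inf_le_left hK.2.2
  exact hne (hqa _ _ hK.1 hK'.1 hK.2.1 (hK_eq.ge.trans inf_le_right) hK'.2.2)

theorem centralizer (hqa : IsCDQuasiAntichain L H) (hL : inCD L) (hH : inCD H) :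
    IsCDQuasiAntichain (Subgroup.centralizer (H : Set G)) (Subgroup.centralizer (L : Set G)) := by
  intro K K' hK hK' hHK hKK' hK'L
  have hLK' : L < Subgroup.centralizer (K' : Set G) := by
    rwa [← hL.centralizer_lt_centralizer_iff hK'.centralizer, hK'.centralizer_centralizer]
  have hKH : Subgroup.centralizer (K : Set G) < H := by
    rwa [← hK.centralizer.centralizer_lt_centralizer_iff hH, hK.centralizer_centralizer]
  exact (hK.centralizer_inj hK').mp
    (hqa _ _ hK'.centralizer hK.centralizer hLK' (centralizer_le hKK') hKH).symm

theorem centralizer_le_normalizer_of_isCDAtom (hqa : IsCDQuasiAntichain L H) (hL : inCD L)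
    (hH : inCD H) (hK : IsCDAtom L H K) :
    Subgroup.centralizer (L : Set G) ≤ normalizer (K : Set G) := by
  rw [← hK.1.centralizer_centralizer]
  exact ((hqa.centralizer hL hH).le_normalizer (hK.centralizer hL hH)).trans
    (normalizer_le_normalizer_centralizer _)

theorem commutator_centralizer_le_of_ne (hqa : IsCDQuasiAntichain L H) (hL : inCD L)
    (hH : inCD H) (hK : IsCDAtom L H K) (hK' : IsCDAtom L H K') (hne : K ≠ K') :
    ⁅H, Subgroup.centralizer (K' : Set G)⁆ ≤ K := by
  have hsup := hqa.sup_eq hK' hK hne.symm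
  rw [← hsup]
  refine commutator_sup_le_of_le_normalizer ?_ ?_ (hsup ▸ hqa.le_normalizer hK)
  · exact (commutator_centralizer_eq_bot K').trans_le bot_le
  · exact le_normalizer_iff_commutator_le_left.mp
      ((centralizer_le hK'.2.1.le).trans (hqa.centralizer_le_normalizer_of_isCDAtom hL hH hK))

theorem commutator_centralizer_le_of_three_atoms (hqa : IsCDQuasiAntichain L H) (hL : inCD L)
    (hH : inCD H) {K₁ K₂ K₃ : Subgroup G} (hK₁ : IsCDAtom L H K₁) (hK₂ : IsCDAtom L H K₂)
    (hK₃ : IsCDAtom L H K₃) (h₁₂ : K₁ ≠ K₂) (h₁₃ : K₁ ≠ K₃) (h₂₃ : K₂ ≠ K₃) :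
    ⁅H, Subgroup.centralizer (L : Set G)⁆ ≤ L := by
  have h₁ : ⁅H, Subgroup.centralizer (K₁ : Set G)⁆ ≤ L := by
    rw [← hqa.inf_eq hK₂ hK₃ h₂₃]
    exact le_inf (hqa.commutator_centralizer_le_of_ne hL hH hK₂ hK₁ h₁₂.symm)
      (hqa.commutator_centralizer_le_of_ne hL hH hK₃ hK₁ h₁₃.symm)
  have h₂ : ⁅H, Subgroup.centralizer (K₂ : Set G)⁆ ≤ L := by
    rw [← hqa.inf_eq hK₁ hK₃ h₁₃]
    exact le_inf (hqa.commutator_centralizer_le_of_ne hL hH hK₁ hK₂ h₁₂)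
      (hqa.commutator_centralizer_le_of_ne hL hH hK₃ hK₂ h₂₃.symm)
  have hsup := (hqa.centralizer hL hH).sup_eq (hK₁.centralizer hL hH) (hK₂.centralizer hL hH)
    ((hK₁.1.centralizer_inj hK₂.1).not.mpr h₁₂)
  rw [← hsup, commutator_comm]
  refine commutator_sup_le_of_le_normalizer ?_ ?_ (hsup ▸ centralizer_le_normalizer _)
  · rwa [commutator_comm]
  · rwa [commutator_comm]

theorem commutator_centralizer_le_inf (hqa : IsCDQuasiAntichain L H) (hL : inCD L)
    (hH : inCD H) {K₁ K₂ K₃ : Subgroup G} (hK₁ : IsCDAtom L H K₁) (hK₂ : IsCDAtom L H K₂)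
    (hK₃ : IsCDAtom L H K₃) (h₁₂ : K₁ ≠ K₂) (h₁₃ : K₁ ≠ K₃) (h₂₃ : K₂ ≠ K₃) :
    ⁅H, Subgroup.centralizer (L : Set G)⁆ ≤ L ⊓ Subgroup.centralizer (H : Set G) := by
  have hdual := (hqa.centralizer hL hH).commutator_centralizer_le_of_three_atoms hH.centralizer
    hL.centralizer (hK₁.centralizer hL hH) (hK₂.centralizer hL hH) (hK₃.centralizer hL hH)
    ((hK₁.1.centralizer_inj hK₂.1).not.mpr h₁₂) ((hK₁.1.centralizer_inj hK₃.1).not.mpr h₁₃)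
    ((hK₂.1.centralizer_inj hK₃.1).not.mpr h₂₃)
  rw [hH.centralizer_centralizer, commutator_comm] at hdual
  exact le_inf (hqa.commutator_centralizer_le_of_three_atoms hL hH hK₁ hK₂ hK₃ h₁₂ h₁₃ h₂₃) hdual

end IsCDQuasiAntichain

end

theorem stmt3_general {G : Type*} [Group G] [Finite G] (L H : Subgroup G)
    (hL : inCD L) (hH : inCD H)
    (hqa : ∀ K K' : Subgroup G, inCD K → inCD K' → L < K → K ≤ K' → K' < H → K = K')
    (hthree : ∃ K1 K2 K3 : Subgroup G,
      (inCD K1 ∧ L < K1 ∧ K1 < H) ∧ (inCD K2 ∧ L < K2 ∧ K2 < H) ∧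
      (inCD K3 ∧ L < K3 ∧ K3 < H) ∧ K1 ≠ K2 ∧ K1 ≠ K3 ∧ K2 ≠ K3)
    (Hstar Lstar : Subgroup G)
    (hHstar : Hstar = Subgroup.centralizer (L : Set G))
    (hLstar : Lstar = Subgroup.centralizer (H : Set G)) :
    ⁅H, Hstar⁆ ≤ L ⊓ Lstar ∧
    L ⊓ Lstar = Subgroup.centralizer ((H ⊔ Hstar : Subgroup G) : Set G) := by
  obtain ⟨K₁, K₂, K₃, hK₁, hK₂, hK₃, h₁₂, h₁₃, h₂₃⟩ := hthree
  subst hHstar hLstar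
  refine ⟨IsCDQuasiAntichain.commutator_centralizer_le_inf hqa hL hH hK₁ hK₂ hK₃ h₁₂ h₁₃ h₂₃, ?_⟩
  rw [centralizer_sup_eq_inf, hL.centralizer_centralizer, inf_comm]

/-- if the interval `⟦L,H⟧` in `CD(G)` is a quasi-antichain with at
least three pairwise distinct atoms, and `H* = C_G(L)`, `L* = C_G(H)`, then
`[H, H*] ≤ L ∩ L*` and `L ∩ L* = C_G(⟨H ∪ H*⟩)`. -/
theorem stmt3 {G : Type*} [Group G] [Finite G] (L H : Subgroup G) (hLH : L < H)
    (hL : inCD L) (hH : inCD H)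
    (hqa : ∀ K K' : Subgroup G, inCD K → inCD K' → L < K → K ≤ K' → K' < H → K = K')
    (hthree : ∃ K1 K2 K3 : Subgroup G,
      (inCD K1 ∧ L < K1 ∧ K1 < H) ∧ (inCD K2 ∧ L < K2 ∧ K2 < H) ∧
      (inCD K3 ∧ L < K3 ∧ K3 < H) ∧ K1 ≠ K2 ∧ K1 ≠ K3 ∧ K2 ≠ K3)
    (Hstar Lstar : Subgroup G)
    (hHstar : Hstar = Subgroup.centralizer (L : Set G))
    (hLstar : Lstar = Subgroup.centralizer (H : Set G)) :
    ⁅H, Hstar⁆ ≤ L ⊓ Lstar ∧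
    L ⊓ Lstar = Subgroup.centralizer ((H ⊔ Hstar : Subgroup G) : Set G) :=
  stmt3_general L H hL hH hqa hthree Hstar Lstar hHstar hLstar
end

section
/- There exists a finite group G such that CD(G) is a quasi-antichain of width 6 with G ∈ CD(G) in which every atom is abelian (for example, an extraspecial group of order 5³ has this property). -/
/-- `CD(G)` is a quasi-antichain of width `w` with `G ∈ CD(G)`, all of whose
atoms are abelian. -/
def IsQACDAllAbelian (G : Type*) [Group G] [Finite G] (w : ℕ) : Prop :=
  inCD (⊤ : Subgroup G) ∧ inCD (Subgroup.center G) ∧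
  (∀ K : Subgroup G, inCD K → Subgroup.center G ≤ K) ∧
  (∀ K K' : Subgroup G, inCD K → inCD K' →
    Subgroup.center G < K → K ≤ K' → K' < ⊤ → K = K') ∧
  {K : Subgroup G | inCD K ∧ Subgroup.center G < K ∧ K < ⊤}.ncard = w ∧
  (∀ K : Subgroup G, inCD K → Subgroup.center G < K → K < ⊤ →
    ∀ x y : K, x * y = y * x)

@[ext] structure Heis where
  a : ZMod 5
  b : ZMod 5
  c : ZMod 5
  deriving Fintype, DecidableEq

instance : Fact (Nat.Prime 5) := ⟨by norm_num⟩

namespace Heis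

instance : Mul Heis := ⟨fun x y => ⟨x.a + y.a, x.b + y.b, x.c + y.c + x.a * y.b⟩⟩
instance : One Heis := ⟨⟨0, 0, 0⟩⟩
instance : Inv Heis := ⟨fun x => ⟨-x.a, -x.b, x.a * x.b - x.c⟩⟩

lemma mul_def (x y : Heis) : x * y = ⟨x.a + y.a, x.b + y.b, x.c + y.c + x.a * y.b⟩ := rfl
lemma one_def : (1 : Heis) = ⟨0, 0, 0⟩ := rfl
lemma inv_def (x : Heis) : x⁻¹ = ⟨-x.a, -x.b, x.a * x.b - x.c⟩ := rfl

instance : Group Heis where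
  mul_assoc x y z := by simp only [mul_def]; ext <;> dsimp <;> ring
  one_mul x := by simp only [mul_def, one_def]; ext <;> dsimp <;> ring
  mul_one x := by simp only [mul_def, one_def]; ext <;> dsimp <;> ring
  inv_mul_cancel x := by simp only [mul_def, inv_def, one_def]; ext <;> dsimp <;> ring

lemma commute_iff (x y : Heis) : x * y = y * x ↔ x.a * y.b = y.a * x.b := by
  simp only [mul_def, Heis.mk.injEq]
  constructor
  · rintro ⟨-, -, h3⟩; linear_combination h3
  · intro h; exact ⟨add_comm _ _, add_comm _ _, by linear_combination h⟩

end Heis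

open Subgroup

/-- The center, explicitly. -/
def Zc : Subgroup Heis where
  carrier := {x | x.a = 0 ∧ x.b = 0}
  mul_mem' := by rintro x y ⟨h1, h2⟩ ⟨h3, h4⟩; exact ⟨by simp [Heis.mul_def, h1, h3], by simp [Heis.mul_def, h2, h4]⟩
  one_mem' := ⟨rfl, rfl⟩
  inv_mem' := by rintro x ⟨h1, h2⟩; exact ⟨by simp [Heis.inv_def, h1], by simp [Heis.inv_def, h2]⟩

lemma mem_Zc {x : Heis} : x ∈ Zc ↔ x.a = 0 ∧ x.b = 0 := Iff.rfl

lemma center_eq : Subgroup.center Heis = Zc := by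
  ext x
  rw [Subgroup.mem_center_iff, mem_Zc]
  constructor
  · intro h
    have h1 := h ⟨0, 1, 0⟩
    have h2 := h ⟨1, 0, 0⟩
    rw [Heis.commute_iff] at h1 h2
    simp only at h1 h2
    constructor
    · simpa using h1.symm
    · simpa using h2
  · rintro ⟨h1, h2⟩ g
    rw [Heis.commute_iff, h1, h2]
    ring

def lineA : Subgroup Heis where
  carrier := {x | x.a = 0}
  mul_mem' := by intro x y h1 h2; simp only [Set.mem_setOf_eq, Heis.mul_def] at *; rw [h1, h2]; ring
  one_mem' := rfl
  inv_mem' := by intro x h; simp only [Set.mem_setOf_eq, Heis.inv_def] at *; rw [h]; ring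

def lineB (t : ZMod 5) : Subgroup Heis where
  carrier := {x | x.b = t * x.a}
  mul_mem' := by intro x y h1 h2; simp only [Set.mem_setOf_eq, Heis.mul_def] at *; rw [h1, h2]; ring
  one_mem' := by simp only [Set.mem_setOf_eq, Heis.one_def]; ring
  inv_mem' := by intro x h; simp only [Set.mem_setOf_eq, Heis.inv_def] at *; rw [h]; ring

lemma mem_lineA {x : Heis} : x ∈ lineA ↔ x.a = 0 := Iff.rfl
lemma mem_lineB {t : ZMod 5} {x : Heis} : x ∈ lineB t ↔ x.b = t * x.a := Iff.rfl

def kline : Option (ZMod 5) → Subgroup Heis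
  | none => lineA
  | some t => lineB t

/-- cardinalities -/
lemma card_Heis : Nat.card Heis = 125 := by
  have e : Heis ≃ ZMod 5 × ZMod 5 × ZMod 5 :=
    { toFun := fun x => (x.a, x.b, x.c)
      invFun := fun p => ⟨p.1, p.2.1, p.2.2⟩
      left_inv := fun x => rfl
      right_inv := fun p => rfl }
  rw [Nat.card_congr e, Nat.card_prod, Nat.card_prod, Nat.card_zmod]

lemma card_Zc : Nat.card Zc = 5 := by
  have e : Zc ≃ ZMod 5 :=
    { toFun := fun z => z.1.c
      invFun := fun c => ⟨⟨0, 0, c⟩, ⟨rfl, rfl⟩⟩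
      left_inv := by rintro ⟨⟨a, b, c⟩, ⟨h1, h2⟩⟩; simp only at h1 h2; subst h1 h2; rfl
      right_inv := fun c => rfl }
  rw [Nat.card_congr e, Nat.card_zmod]

lemma card_lineA : Nat.card lineA = 25 := by
  have e : lineA ≃ ZMod 5 × ZMod 5 :=
    { toFun := fun z => (z.1.b, z.1.c)
      invFun := fun p => ⟨⟨0, p.1, p.2⟩, rfl⟩
      left_inv := by rintro ⟨⟨a, b, c⟩, h⟩; simp only [mem_lineA] at h; subst h; rfl
      right_inv := fun p => rfl }
  rw [Nat.card_congr e, Nat.card_prod, Nat.card_zmod]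

lemma card_lineB (t : ZMod 5) : Nat.card (lineB t) = 25 := by
  have e : lineB t ≃ ZMod 5 × ZMod 5 :=
    { toFun := fun z => (z.1.a, z.1.c)
      invFun := fun p => ⟨⟨p.1, t * p.1, p.2⟩, rfl⟩
      left_inv := by
        rintro ⟨⟨a, b, c⟩, h⟩
        have h' : b = t * a := h
        subst h'; rfl
      right_inv := fun p => rfl }
  rw [Nat.card_congr e, Nat.card_prod, Nat.card_zmod]

lemma card_kline (o : Option (ZMod 5)) : Nat.card (kline o) = 25 := by
  cases o with
  | none => exact card_lineA
  | some t => exact card_lineB t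

lemma cent_singleB {x : Heis} (ha : x.a ≠ 0) :
    Subgroup.centralizer {x} = lineB (x.b * x.a⁻¹) := by
  ext y
  rw [Subgroup.mem_centralizer_singleton_iff, Heis.commute_iff, mem_lineB]
  constructor
  · intro h
    field_simp
    linear_combination -h
  · intro h
    rw [h]
    field_simp

lemma cent_singleA {x : Heis} (ha : x.a = 0) (hb : x.b ≠ 0) :
    Subgroup.centralizer {x} = lineA := by
  ext y
  rw [Subgroup.mem_centralizer_singleton_iff, Heis.commute_iff, mem_lineA, ha]
  constructor
  · intro h
    have h0 : y.a * x.b = 0 := by linear_combination h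
    rcases mul_eq_zero.mp h0 with h' | h'
    · exact h'
    · exact absurd h' hb
  · intro h
    rw [h]
    ring

lemma cent_single {x : Heis} (hx : x ∉ Zc) :
    ∃ o, Subgroup.centralizer {x} = kline o := by
  rw [mem_Zc, not_and_or] at hx
  by_cases ha : x.a = 0
  · have hb : x.b ≠ 0 := by tauto
    exact ⟨none, cent_singleA ha hb⟩
  · exact ⟨some (x.b * x.a⁻¹), cent_singleB ha⟩

lemma kline_comm (o : Option (ZMod 5)) :
    ∀ x ∈ kline o, ∀ y ∈ kline o, x * y = y * x := by
  cases o with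
  | none =>
    intro x hx y hy
    rw [Heis.commute_iff, mem_lineA.mp hx, mem_lineA.mp hy]; ring
  | some t =>
    intro x hx y hy
    rw [Heis.commute_iff, mem_lineB.mp hx, mem_lineB.mp hy]; ring

lemma Zc_le_kline (o : Option (ZMod 5)) : Zc ≤ kline o := by
  cases o with
  | none => rintro x ⟨h1, h2⟩; exact h1
  | some t => rintro x ⟨h1, h2⟩; show x.b = t * x.a; rw [h1, h2]; ring

lemma cent_kline (o : Option (ZMod 5)) :
    Subgroup.centralizer (kline o : Set Heis) = kline o := by
  apply le_antisymm
  · cases o with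
    | none =>
      have hmem : ({⟨0, 1, 0⟩} : Set Heis) ⊆ (kline none : Set Heis) := by
        simp [Set.singleton_subset_iff, kline, mem_lineA]
      refine le_trans (Subgroup.centralizer_le hmem) ?_
      rw [cent_singleA (x := ⟨0, 1, 0⟩) rfl one_ne_zero]
      exact le_refl _
    | some t =>
      have hmem : ({⟨1, t, 0⟩} : Set Heis) ⊆ (kline (some t) : Set Heis) := by
        simp only [Set.singleton_subset_iff, SetLike.mem_coe]
        show t = t * 1; ring
      refine le_trans (Subgroup.centralizer_le hmem) ?_
      rw [cent_singleB (x := ⟨1, t, 0⟩) one_ne_zero]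
      show lineB (t * 1⁻¹) ≤ lineB t
      rw [inv_one, mul_one]
  · intro y hy
    rw [Subgroup.mem_centralizer_iff]
    intro h hh
    exact kline_comm o h hh y hy

lemma dvd125 {d : ℕ} (h : d ∣ 125) : d = 1 ∨ d = 5 ∨ d = 25 ∨ d = 125 := by
  have h1 : d ≤ 125 := Nat.le_of_dvd (by norm_num) h
  interval_cases d <;> revert h <;> decide

lemma subgroup_eq_of_le_of_card {H K : Subgroup Heis} (h : H ≤ K)
    (hc : Nat.card K ≤ Nat.card H) : H = K := by
  apply SetLike.coe_injective
  refine Set.eq_of_subset_of_ncard_le h ?_ (Set.toFinite _)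
  rw [← Nat.card_coe_set_eq, ← Nat.card_coe_set_eq]
  exact hc

lemma card_dvd (K : Subgroup Heis) : Nat.card K ∣ 125 :=
  card_Heis ▸ Subgroup.card_subgroup_dvd_card K

lemma eq_top_of_card (K : Subgroup Heis) (h : Nat.card K = 125) : K = ⊤ :=
  Subgroup.eq_top_of_card_eq K (by rw [h, card_Heis])

lemma le_center_of_cent_top {K : Subgroup Heis}
    (h : Subgroup.centralizer (K : Set Heis) = ⊤) : K ≤ Zc := by
  rw [← center_eq]
  intro x hx
  exact Subgroup.centralizer_eq_top_iff_subset.mp h hx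

lemma cent_top : Subgroup.centralizer ((⊤ : Subgroup Heis) : Set Heis) = Zc := by
  rw [Subgroup.coe_top, Subgroup.centralizer_univ, center_eq]

lemma CDmeasure_top : CDmeasure (⊤ : Subgroup Heis) = 625 := by
  rw [CDmeasure, Subgroup.card_top, card_Heis, cent_top, card_Zc]

lemma CDmeasure_Zc : CDmeasure Zc = 625 := by
  have h : Subgroup.centralizer (Zc : Set Heis) = ⊤ := by
    rw [← center_eq]
    exact Subgroup.centralizer_eq_top_iff_subset.mpr (fun x hx => hx)
  rw [CDmeasure, card_Zc, h, Subgroup.card_top, card_Heis]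

lemma CDmeasure_kline (o : Option (ZMod 5)) : CDmeasure (kline o) = 625 := by
  rw [CDmeasure, card_kline, cent_kline, card_kline]

lemma measure_le (K : Subgroup Heis) : CDmeasure K ≤ 625 := by
  have hd := dvd125 (card_dvd K)
  have hc := dvd125 (card_dvd (Subgroup.centralizer (K : Set Heis)))
  rw [CDmeasure]
  rcases hd with h | h | h | h
  · rcases hc with h' | h' | h' | h' <;> simp only [h, h'] <;> norm_num
  · rcases hc with h' | h' | h' | h' <;> simp only [h, h'] <;> norm_num
  · rcases hc with h' | h' | h' | h'
    · simp only [h, h']; norm_num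
    · simp only [h, h']; norm_num
    · simp only [h, h']; norm_num
    · exfalso
      have htop := eq_top_of_card _ h'
      have hle := le_center_of_cent_top htop
      have := Subgroup.card_le_of_le hle
      rw [h, card_Zc] at this
      omega
  · have htop := eq_top_of_card _ h
    simp only [htop, cent_top, Subgroup.card_top, card_Heis, card_Zc]
    norm_num

lemma master {K : Subgroup Heis} (h : inCD K) :
    K = Zc ∨ K = ⊤ ∨ ∃ o, K = kline o := by
  have hm : CDmeasure K = 625 := by
    refine le_antisymm (measure_le K) ?_
    have := h ⊤
    rwa [CDmeasure_top] at this
  have hd := dvd125 (card_dvd K)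
  have hc := dvd125 (card_dvd (Subgroup.centralizer (K : Set Heis)))
  rw [CDmeasure] at hm
  rcases hd with h1 | h1 | h1 | h1
  · exfalso; rw [h1] at hm; omega
  · -- card K = 5 : K = Zc
    have hc125 : Nat.card (Subgroup.centralizer (K : Set Heis)) = 125 := by
      rw [h1] at hm; omega
    have hle : K ≤ Zc := le_center_of_cent_top (eq_top_of_card _ hc125)
    exact Or.inl (subgroup_eq_of_le_of_card hle (by rw [card_Zc, h1]))
  · -- card K = 25 : K is a line
    have hc25 : Nat.card (Subgroup.centralizer (K : Set Heis)) = 25 := by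
      rw [h1] at hm; omega
    have hKZ : ¬ K ≤ Zc := by
      intro hle
      have := Subgroup.card_le_of_le hle
      rw [h1, card_Zc] at this
      omega
    obtain ⟨x, hxK, hxZ⟩ := SetLike.not_le_iff_exists.mp hKZ
    obtain ⟨o, ho⟩ := cent_single hxZ
    have hle1 : Subgroup.centralizer (K : Set Heis) ≤ kline o := by
      rw [← ho]
      exact Subgroup.centralizer_le (Set.singleton_subset_iff.mpr hxK)
    have heq : Subgroup.centralizer (K : Set Heis) = kline o :=
      subgroup_eq_of_le_of_card hle1 (by rw [card_kline, hc25])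
    have h3 : K ≤ Subgroup.centralizer
        ((Subgroup.centralizer (K : Set Heis)) : Set Heis) :=
      Subgroup.le_centralizer_iff.mp (le_refl _)
    rw [heq, cent_kline] at h3
    exact Or.inr (Or.inr ⟨o, subgroup_eq_of_le_of_card h3 (by rw [card_kline, h1])⟩)
  · exact Or.inr (Or.inl (eq_top_of_card _ h1))

lemma Zc_lt_kline (o : Option (ZMod 5)) : Zc < kline o := by
  refine lt_of_le_of_ne (Zc_le_kline o) ?_
  intro he
  have h1 := card_kline o
  rw [← he, card_Zc] at h1
  omega

lemma kline_lt_top (o : Option (ZMod 5)) : kline o < ⊤ := by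
  refine lt_top_iff_ne_top.mpr ?_
  intro he
  have h1 := card_kline o
  rw [he, Subgroup.card_top, card_Heis] at h1
  omega

lemma kline_le_inj {o o' : Option (ZMod 5)} (h : kline o ≤ kline o') : o = o' := by
  match o, o' with
  | none, none => rfl
  | none, some t =>
    exfalso
    have h1 := h (show (⟨0, 1, 0⟩ : Heis) ∈ lineA from rfl)
    simp only [kline] at h1
    rw [mem_lineB] at h1
    simp at h1
  | some t, none =>
    exfalso
    have h1 := h (show (⟨1, t, 0⟩ : Heis) ∈ lineB t by rw [mem_lineB]; ring)
    simp only [kline] at h1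
    rw [mem_lineA] at h1
    simp at h1
  | some t, some s =>
    have h1 := h (show (⟨1, t, 0⟩ : Heis) ∈ lineB t by rw [mem_lineB]; ring)
    simp only [kline] at h1
    rw [mem_lineB] at h1
    simp only [mul_one] at h1
    rw [h1]

lemma inCD_kline (o : Option (ZMod 5)) : inCD (kline o) := by
  intro K
  rw [CDmeasure_kline]
  exact measure_le K

lemma atom_class {K : Subgroup Heis} (h : inCD K)
    (h1 : Subgroup.center Heis < K) (h2 : K < ⊤) : ∃ o, K = kline o := by
  rw [center_eq] at h1
  rcases master h with h3 | h3 | h3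
  · exfalso; rw [h3] at h1; exact lt_irrefl _ h1
  · exfalso; rw [h3] at h2; exact lt_irrefl _ h2
  · exact h3

/-- there exists a finite group `G` such that `CD(G)` is a
quasi-antichain of width 6 with `G ∈ CD(G)` in which every atom is abelian. -/
theorem stmt15 : ∃ (G : Type) (grp : Group G) (fin : Finite G),
    @IsQACDAllAbelian G grp fin 6 := by
  refine ⟨Heis, inferInstance, inferInstance, ?_, ?_, ?_, ?_, ?_, ?_⟩
  · intro K
    rw [CDmeasure_top]
    exact measure_le K
  · intro K
    rw [center_eq, CDmeasure_Zc]
    exact measure_le K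
  · intro K hK
    rw [center_eq]
    rcases master hK with h | h | ⟨o, h⟩
    · rw [h]
    · rw [h]; exact le_top
    · rw [h]; exact Zc_le_kline o
  · intro K K' hK hK' hlt hle hlt'
    obtain ⟨o, rfl⟩ := atom_class hK hlt (lt_of_le_of_lt hle hlt')
    obtain ⟨o', rfl⟩ := atom_class hK' (lt_of_lt_of_le hlt hle) hlt'
    rw [kline_le_inj hle]
  · have hinj : Function.Injective kline := fun o o' h => kline_le_inj (le_of_eq h)
    have hset : {K : Subgroup Heis | inCD K ∧ Subgroup.center Heis < K ∧ K < ⊤}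
        = Set.range kline := by
      ext K
      simp only [Set.mem_setOf_eq, Set.mem_range]
      constructor
      · rintro ⟨h1, h2, h3⟩
        obtain ⟨o, rfl⟩ := atom_class h1 h2 h3
        exact ⟨o, rfl⟩
      · rintro ⟨o, rfl⟩
        exact ⟨inCD_kline o, center_eq ▸ Zc_lt_kline o, kline_lt_top o⟩
    rw [hset]
    rw [← Nat.card_coe_set_eq]
    rw [Nat.card_congr (Equiv.ofInjective kline hinj).symm]
    rw [Nat.card_eq_fintype_card]
    rfl
  · intro K hK h1 h2 x y
    obtain ⟨o, rfl⟩ := atom_class hK h1 h2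
    exact Subtype.ext (kline_comm o x.1 x.2 y.1 y.2)
end

section
/- Let H be a finite nonabelian group whose Chermak-Delgado lattice consists exactly of H and its center, i.e., CD(H) = {H, Z(H)}. Set G = H × H. Then CD(G) = {G, Z(G), Z(H) × H, H × Z(H)}; in particular CD(G) is a quasi-antichain of width 2 with G ∈ CD(G), its two atoms Z(H) × H and H × Z(H) are nonabelian, and C_G(Z(H) × H) = H × Z(H). -/
section Aux

open Subgroup

variable {H : Type*} [Group H]

lemma aux_centralizer_eq_prod (K : Subgroup (H × H)) :
    Subgroup.centralizer (K : Set (H × H)) =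
      (Subgroup.centralizer ((K.map (MonoidHom.fst H H)) : Set H)).prod
      (Subgroup.centralizer ((K.map (MonoidHom.snd H H)) : Set H)) := by
  ext ⟨a, b⟩
  simp only [mem_prod, mem_centralizer_iff]
  constructor
  · intro h
    constructor
    · rintro x ⟨⟨x', y'⟩, hx, rfl⟩
      exact congrArg Prod.fst (h _ hx)
    · rintro y ⟨⟨x', y'⟩, hy, rfl⟩
      exact congrArg Prod.snd (h _ hy)
  · rintro ⟨h1, h2⟩ ⟨x, y⟩ hxy
    exact Prod.ext (h1 x ⟨(x,y), hxy, rfl⟩) (h2 y ⟨(x,y), hxy, rfl⟩)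

lemma aux_centralizer_prod (A B : Subgroup H) :
    Subgroup.centralizer ((A.prod B : Subgroup (H × H)) : Set (H × H)) =
      (Subgroup.centralizer (A : Set H)).prod (Subgroup.centralizer (B : Set H)) := by
  ext ⟨a, b⟩
  simp only [mem_prod, mem_centralizer_iff]
  constructor
  · intro h
    constructor
    · intro x hx
      exact congrArg Prod.fst (h (x, 1) ⟨hx, B.one_mem⟩)
    · intro y hy
      exact congrArg Prod.snd (h (1, y) ⟨A.one_mem, hy⟩)
  · rintro ⟨h1, h2⟩ ⟨x, y⟩ ⟨hx, hy⟩
    exact Prod.ext (h1 x hx) (h2 y hy)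

lemma aux_card_prod (A B : Subgroup H) :
    Nat.card (A.prod B) = Nat.card A * Nat.card B := by
  rw [Nat.card_congr (A.prodEquiv B).toEquiv, Nat.card_prod]

lemma aux_CDmeasure_prod (A B : Subgroup H) :
    CDmeasure (A.prod B) = CDmeasure A * CDmeasure B := by
  unfold CDmeasure
  rw [aux_centralizer_prod, aux_card_prod, aux_card_prod]
  ring

lemma aux_le_prod_map (K : Subgroup (H × H)) :
    K ≤ (K.map (MonoidHom.fst H H)).prod (K.map (MonoidHom.snd H H)) := by
  rintro ⟨x, y⟩ h
  exact ⟨⟨(x,y), h, rfl⟩, ⟨(x,y), h, rfl⟩⟩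

lemma aux_centralizer_center :
    Subgroup.centralizer ((Subgroup.center H) : Set H) = ⊤ := by
  rw [eq_top_iff]
  intro x _
  rw [mem_centralizer_iff]
  intro g hg
  exact (Subgroup.mem_center_iff.mp hg x).symm

lemma aux_center_prod :
    Subgroup.center (H × H) = (Subgroup.center H).prod (Subgroup.center H) := by
  ext ⟨a, b⟩
  simp only [mem_prod, Subgroup.mem_center_iff]
  constructor
  · intro h
    constructor
    · intro g; exact congrArg Prod.fst (h (g, 1))
    · intro g; exact congrArg Prod.snd (h (1, g))
  · rintro ⟨h1, h2⟩ ⟨x, y⟩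
    exact Prod.ext (h1 x) (h2 y)

lemma aux_CDmeasure_pos [Finite H] (K : Subgroup H) : 0 < CDmeasure K :=
  Nat.mul_pos Nat.card_pos Nat.card_pos

lemma aux_CDmeasure_le_proj [Finite H] (K : Subgroup (H × H)) :
    CDmeasure K ≤
      CDmeasure (K.map (MonoidHom.fst H H)) * CDmeasure (K.map (MonoidHom.snd H H)) := by
  have hc : Nat.card (Subgroup.centralizer (K : Set (H × H)))
      = Nat.card (Subgroup.centralizer ((K.map (MonoidHom.fst H H)) : Set H))
        * Nat.card (Subgroup.centralizer ((K.map (MonoidHom.snd H H)) : Set H)) := by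
    rw [aux_centralizer_eq_prod, aux_card_prod]
  have hk : Nat.card K ≤
      Nat.card (K.map (MonoidHom.fst H H)) * Nat.card (K.map (MonoidHom.snd H H)) := by
    rw [← aux_card_prod]
    exact Subgroup.card_le_of_le (aux_le_prod_map K)
  unfold CDmeasure
  rw [hc]
  calc Nat.card K * (Nat.card (Subgroup.centralizer ((K.map (MonoidHom.fst H H)) : Set H))
        * Nat.card (Subgroup.centralizer ((K.map (MonoidHom.snd H H)) : Set H)))
      ≤ (Nat.card (K.map (MonoidHom.fst H H)) * Nat.card (K.map (MonoidHom.snd H H)))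
        * (Nat.card (Subgroup.centralizer ((K.map (MonoidHom.fst H H)) : Set H))
        * Nat.card (Subgroup.centralizer ((K.map (MonoidHom.snd H H)) : Set H))) :=
        Nat.mul_le_mul_right _ hk
    _ = _ := by ring

end Aux

/-- if `H` is a finite nonabelian group with
`CD(H) = {H, Z(H)}`, and `G = H × H`, then
`CD(G) = {G, Z(G), Z(H) × H, H × Z(H)}`; in particular `CD(G)` is a
quasi-antichain of width 2 with `G ∈ CD(G)`, its two atoms `Z(H) × H` and
`H × Z(H)` are nonabelian, and `C_G(Z(H) × H) = H × Z(H)`. -/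
theorem stmt16 {H : Type*} [Group H] [Finite H]
    (hna : ¬ ∀ x y : H, x * y = y * x)
    (htop : inCD (⊤ : Subgroup H)) (hcen : inCD (Subgroup.center H))
    (honly : ∀ K : Subgroup H, inCD K → K = ⊤ ∨ K = Subgroup.center H) :
    (∀ K : Subgroup (H × H), inCD K ↔
      (K = ⊤ ∨ K = Subgroup.center (H × H) ∨
        K = (Subgroup.center H).prod (⊤ : Subgroup H) ∨
        K = (⊤ : Subgroup H).prod (Subgroup.center H))) ∧
    inCD (⊤ : Subgroup (H × H)) ∧ inCD (Subgroup.center (H × H)) ∧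
    (∀ K : Subgroup (H × H), inCD K → Subgroup.center (H × H) ≤ K) ∧
    (∀ K K' : Subgroup (H × H), inCD K → inCD K' →
      Subgroup.center (H × H) < K → K ≤ K' → K' < ⊤ → K = K') ∧
    {K : Subgroup (H × H) | inCD K ∧ Subgroup.center (H × H) < K ∧ K < ⊤}.ncard = 2 ∧
    (¬ ∀ x y : ((Subgroup.center H).prod (⊤ : Subgroup H)), x * y = y * x) ∧
    (¬ ∀ x y : ((⊤ : Subgroup H).prod (Subgroup.center H)), x * y = y * x) ∧
    Subgroup.centralizer (((Subgroup.center H).prod (⊤ : Subgroup H) : Subgroup (H × H)) :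
        Set (H × H)) =
      (⊤ : Subgroup H).prod (Subgroup.center H) := by
  classical
  push_neg at hna
  obtain ⟨x₀, y₀, hxy₀⟩ := hna
  have hy₀ : y₀ ∉ Subgroup.center H := fun h => hxy₀ (Subgroup.mem_center_iff.mp h x₀)
  set m := CDmeasure (⊤ : Subgroup H) with hm
  have hmpos : 0 < m := aux_CDmeasure_pos _
  have hZm : CDmeasure (Subgroup.center H) = m := le_antisymm (htop _) (hcen _)
  -- measures of the four subgroups
  set A := (Subgroup.center H).prod (⊤ : Subgroup H) with hA
  set B := (⊤ : Subgroup H).prod (Subgroup.center H) with hB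
  have hmtop : CDmeasure (⊤ : Subgroup (H × H)) = m * m := by
    rw [← Subgroup.top_prod_top, aux_CDmeasure_prod]
  have hmcen : CDmeasure (Subgroup.center (H × H)) = m * m := by
    rw [aux_center_prod, aux_CDmeasure_prod, hZm]
  have hmA : CDmeasure A = m * m := by rw [hA, aux_CDmeasure_prod, hZm]
  have hmB : CDmeasure B = m * m := by rw [hB, aux_CDmeasure_prod, hZm]
  -- every subgroup has measure at most m * m
  have hle : ∀ K : Subgroup (H × H), CDmeasure K ≤ m * m := by
    intro K
    refine (aux_CDmeasure_le_proj K).trans ?_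
    exact Nat.mul_le_mul (htop _) (htop _)
  have hinCD_of : ∀ K : Subgroup (H × H), CDmeasure K = m * m → inCD K := by
    intro K hK L
    rw [hK]; exact hle L
  -- the main characterization
  have hiff : ∀ K : Subgroup (H × H), inCD K ↔
      (K = ⊤ ∨ K = Subgroup.center (H × H) ∨ K = A ∨ K = B) := by
    intro K
    constructor
    · intro hK
      have hKm : CDmeasure K = m * m :=
        le_antisymm (hle K) (hmtop ▸ hK (⊤ : Subgroup (H × H)))
      set P₁ := K.map (MonoidHom.fst H H) with hP₁
      set P₂ := K.map (MonoidHom.snd H H) with hP₂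
      have hprod : m * m ≤ CDmeasure P₁ * CDmeasure P₂ :=
        hKm ▸ aux_CDmeasure_le_proj K
      have h1 : CDmeasure P₁ = m := by
        have hle1 := htop P₁
        have hle2 := htop P₂
        have : m * m ≤ CDmeasure P₁ * m :=
          hprod.trans (Nat.mul_le_mul_left _ hle2)
        exact le_antisymm hle1 (Nat.le_of_mul_le_mul_right this hmpos)
      have h2 : CDmeasure P₂ = m := by
        have hle2 := htop P₂
        have : m * m ≤ m * CDmeasure P₂ :=
          hprod.trans (Nat.mul_le_mul_right _ (htop P₁))
        exact le_antisymm hle2 (Nat.le_of_mul_le_mul_left this hmpos)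
      -- K equals the product of its projections
      have hKeq : K = P₁.prod P₂ := by
        have hmeq : CDmeasure (P₁.prod P₂) = CDmeasure K := by
          rw [aux_CDmeasure_prod, h1, h2, hKm]
        have hcent : Nat.card (Subgroup.centralizer ((P₁.prod P₂ : Subgroup (H × H)) : Set (H × H)))
            = Nat.card (Subgroup.centralizer (K : Set (H × H))) := by
          rw [aux_centralizer_prod, aux_centralizer_eq_prod, ← hP₁, ← hP₂]
        have hcpos : 0 < Nat.card (Subgroup.centralizer (K : Set (H × H))) := Nat.card_pos
        have hcard : Nat.card (P₁.prod P₂) ≤ Nat.card K := by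
          have : Nat.card (P₁.prod P₂) * Nat.card (Subgroup.centralizer (K : Set (H × H)))
              = Nat.card K * Nat.card (Subgroup.centralizer (K : Set (H × H))) := by
            have := hmeq
            unfold CDmeasure at this
            rwa [hcent] at this
          exact Nat.le_of_mul_le_mul_right this.le hcpos
        exact Subgroup.eq_of_le_of_card_ge (aux_le_prod_map K) hcard
      have hc1 : P₁ = ⊤ ∨ P₁ = Subgroup.center H :=
        honly P₁ (fun L => (htop L).trans h1.ge)
      have hc2 : P₂ = ⊤ ∨ P₂ = Subgroup.center H :=
        honly P₂ (fun L => (htop L).trans h2.ge)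
      rcases hc1 with rfl1 | rfl1 <;> rcases hc2 with rfl2 | rfl2 <;>
        rw [hKeq, rfl1, rfl2]
      · left; exact Subgroup.top_prod_top
      · right; right; right; rfl
      · right; right; left; rfl
      · right; left; exact aux_center_prod.symm
    · rintro (rfl | rfl | rfl | rfl)
      · exact hinCD_of _ hmtop
      · exact hinCD_of _ hmcen
      · exact hinCD_of _ hmA
      · exact hinCD_of _ hmB
  -- element facts
  have hmemA : ((1 : H), y₀) ∈ A := ⟨Subgroup.one_mem _, Subgroup.mem_top _⟩
  have hmemB : (y₀, (1 : H)) ∈ B := ⟨Subgroup.mem_top _, Subgroup.one_mem _⟩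
  have hnotB : ((1 : H), y₀) ∉ B := fun h => hy₀ h.2
  have hnotA : (y₀, (1 : H)) ∉ A := fun h => hy₀ h.1
  have hnotZ : ((1 : H), y₀) ∉ Subgroup.center (H × H) := by
    rw [aux_center_prod]
    exact fun h => hy₀ h.2
  have hnotZ' : (y₀, (1 : H)) ∉ Subgroup.center (H × H) := by
    rw [aux_center_prod]
    exact fun h => hy₀ h.1
  have hAB : A ≠ B := fun h => hnotB (h ▸ hmemA)
  have hnAB : ¬ A ≤ B := fun h => hnotB (h hmemA)
  have hnBA : ¬ B ≤ A := fun h => hnotA (h hmemB)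
  have hZleA : Subgroup.center (H × H) ≤ A := by
    rw [aux_center_prod, hA]
    exact Subgroup.prod_mono le_rfl le_top
  have hZleB : Subgroup.center (H × H) ≤ B := by
    rw [aux_center_prod, hB]
    exact Subgroup.prod_mono le_top le_rfl
  have hZltA : Subgroup.center (H × H) < A :=
    lt_of_le_of_ne hZleA (fun h => hnotZ (h ▸ hmemA))
  have hZltB : Subgroup.center (H × H) < B :=
    lt_of_le_of_ne hZleB (fun h => hnotZ' (h ▸ hmemB))
  have hAltTop : A < ⊤ :=
    lt_top_iff_ne_top.mpr (fun h => hnotA (h ▸ Subgroup.mem_top _))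
  have hBltTop : B < ⊤ :=
    lt_top_iff_ne_top.mpr (fun h => hnotB (h ▸ Subgroup.mem_top _))
  have hZltTop : Subgroup.center (H × H) < ⊤ :=
    lt_top_iff_ne_top.mpr (fun h => hnotZ (h ▸ Subgroup.mem_top _))
  refine ⟨hiff, hinCD_of _ hmtop, hinCD_of _ hmcen, ?_, ?_, ?_, ?_, ?_, ?_⟩
  · -- center ≤ every CD member
    intro K hK
    rcases (hiff K).mp hK with rfl | rfl | rfl | rfl
    · exact le_top
    · exact le_rfl
    · exact hZleA
    · exact hZleB
  · -- quasi-antichain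
    intro K K' hK hK' h1 h2 h3
    rcases (hiff K).mp hK with rfl | rfl | rfl | rfl
    · exact absurd (lt_of_le_of_lt h2 h3) (lt_irrefl _)
    · exact absurd h1 (lt_irrefl _)
    · rcases (hiff K').mp hK' with rfl | rfl | rfl | rfl
      · exact absurd h3 (lt_irrefl _)
      · exact absurd (lt_of_lt_of_le h1 h2) (lt_irrefl _)
      · rfl
      · exact absurd h2 hnAB
    · rcases (hiff K').mp hK' with rfl | rfl | rfl | rfl
      · exact absurd h3 (lt_irrefl _)
      · exact absurd (lt_of_lt_of_le h1 h2) (lt_irrefl _)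
      · exact absurd h2 hnBA
      · rfl
  · -- ncard
    have hset : {K : Subgroup (H × H) | inCD K ∧ Subgroup.center (H × H) < K ∧ K < ⊤}
        = {A, B} := by
      ext K
      simp only [Set.mem_setOf_eq, Set.mem_insert_iff, Set.mem_singleton_iff]
      constructor
      · rintro ⟨hK, h1, h2⟩
        rcases (hiff K).mp hK with rfl | rfl | rfl | rfl
        · exact absurd h2 (lt_irrefl _)
        · exact absurd h1 (lt_irrefl _)
        · exact Or.inl rfl
        · exact Or.inr rfl
      · rintro (rfl | rfl)
        · exact ⟨(hiff A).mpr (Or.inr (Or.inr (Or.inl rfl))), hZltA, hAltTop⟩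
        · exact ⟨(hiff B).mpr (Or.inr (Or.inr (Or.inr rfl))), hZltB, hBltTop⟩
    rw [hset, Set.ncard_pair hAB]
  · -- A nonabelian
    intro hab
    have ha := hab ⟨((1 : H), x₀), ⟨Subgroup.one_mem _, Subgroup.mem_top _⟩⟩
      ⟨((1 : H), y₀), ⟨Subgroup.one_mem _, Subgroup.mem_top _⟩⟩
    exact hxy₀ (congrArg (fun z : A => (z : H × H).2) ha)
  · -- B nonabelian
    intro hab
    have ha := hab ⟨(x₀, (1 : H)), ⟨Subgroup.mem_top _, Subgroup.one_mem _⟩⟩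
      ⟨(y₀, (1 : H)), ⟨Subgroup.mem_top _, Subgroup.one_mem _⟩⟩
    exact hxy₀ (congrArg (fun z : B => (z : H × H).1) ha)
  · -- centralizer
    rw [hA, aux_centralizer_prod, aux_centralizer_center, Subgroup.coe_top,
      Subgroup.centralizer_univ]
end
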